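/- arXiv:math-ph/0204001 — 7 statements merged into one kernel-verified Lean document; each statement's English description precedes it below -/
import Mathlib

section
/- Let k ≥ 1, let π_0,…,π_{k−1} be distinct reals and ω(0),…,ω(k−1) strictly positive reals, and set w(π_x) = [[0, ω(x)],[0,0]] and ρ_m = ω(m)^{−1}·∏_{0≤j≤k−1, j≠m}(π_m−π_j)^{−2} for 0 ≤ m ≤ k−1. Define m_k : ℂ∖{π_0,…,π_{k−1}} → Mat(2,ℂ) by: (1,1) entry (ζ−π_0)⋯(ζ−π_{k−1}); (1,2) entry 0; (2,1) entry (ζ−π_0)⋯(ζ−π_{k−1})·Σ_{m=0}^{k−1} ρ_m/(ζ−π_m); (2,2) entry ((ζ−π_0)⋯(ζ−π_{k−1}))^{−1}. Then m_k is the unique solution of the discrete Riemann–Hilbert problem on {π_0,…,π_{k−1}} with jump matrices w that satisfies m_k(ζ)·diag(ζ^{−k}, ζ^{k}) → I as ζ → ∞. -/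
/-!
Off the nodes, `m_k = [[Π, 0], [Q, Π⁻¹]]` with `Q = ∑_m ρ_m ∏_{j ≠ m} (ζ - π_j)` a polynomial,
so only the `(2,2)` entry has poles, all simple. At `π_x` the residue of `m_k` is
`[[0, 0], [0, ∏_{j ≠ x} (π_x - π_j)⁻¹]]`, while `m_k w` tends to `[[0, 0], [0, ω(x) Q(π_x)]]`;
the choice of `ρ_x` makes these equal.

For uniqueness, the difference `d` of two solutions solves the same problem with
`d · diag(ζ^{-k}, ζ^k) → 0`. Its second column has at most simple poles at the `k` nodes and is
`o(ζ^{-k})`, so after multiplication by `Π` it is entire and tends to `0`: it vanishes by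
Liouville. The jump condition then forces the first column to tend to `0` at every node. It is
therefore entire, vanishes at the nodes and is `o(ζ^k)`; dividing by `Π` and applying Liouville
again shows that it vanishes too.
-/

open Filter Topology Matrix Polynomial

noncomputable section

/-- 2×2 complex matrices. -/
abbrev Mat2 : Type := Matrix (Fin 2) (Fin 2) ℂ

/-- Entrywise complex differentiability (= analyticity) of a matrix-valued function on a set. -/
def EntryDiffOn (m : ℂ → Mat2) (U : Set ℂ) : Prop :=
  ∀ i j, DifferentiableOn ℂ (fun ζ => m ζ i j) U

/-- `m` solves the discrete Riemann–Hilbert problem `(Z, w)`: `m` is analytic off `Z`, has at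
most a simple pole at each `x ∈ Z` (i.e. `ζ ↦ (ζ - x) • m ζ` extends analytically to a
neighbourhood of `x`), and the value at `x` of this extension (the residue of `m` at `x`)
equals the limit of `m(ζ) * w(x)` as `ζ → x`. -/
def SolvesDRHP (Z : Finset ℂ) (w : ℂ → Mat2) (m : ℂ → Mat2) : Prop :=
  EntryDiffOn m ((Z : Set ℂ))ᶜ ∧
  ∀ x ∈ Z, ∃ g : ℂ → Mat2,
    EntryDiffOn g (((Z : Set ℂ))ᶜ ∪ {x}) ∧
    (∀ ζ, ζ ∉ (Z : Set ℂ) → g ζ = (ζ - x) • m ζ) ∧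
    Filter.Tendsto (fun ζ => m ζ * w x) (𝓝[≠] x) (𝓝 (g x))

/-- The asymptotic condition `m(ζ) · diag(ζ^{-k}, ζ^k) → I` as `ζ → ∞`. -/
def AsympId (k : ℕ) (m : ℂ → Mat2) : Prop :=
  Filter.Tendsto (fun ζ : ℂ => m ζ * Matrix.diagonal ![ζ⁻¹ ^ k, ζ ^ k])
    (Bornology.cobounded ℂ) (𝓝 1)

/-- `Π(ζ) = (ζ−π₀)⋯(ζ−π_{k−1})`. -/
def Pik (k : ℕ) (π : ℕ → ℝ) (ζ : ℂ) : ℂ :=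
  ∏ j ∈ Finset.range k, (ζ - (π j : ℂ))

/-- `ρ_m = ω(m)⁻¹ ∏_{0≤j≤k−1, j≠m} (π_m − π_j)⁻²`. -/
def rho (k : ℕ) (π ω : ℕ → ℝ) (m : ℕ) : ℂ :=
  (ω m : ℂ)⁻¹ * ∏ j ∈ (Finset.range k).erase m, (((π m : ℂ) - (π j : ℂ)) ^ 2)⁻¹

/-- The explicit solution `m_k` of the DRHP on `{π₀,…,π_{k−1}}`. -/
def mkFun (k : ℕ) (π ω : ℕ → ℝ) (ζ : ℂ) : Mat2 :=
  !![Pik k π ζ, 0;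
     Pik k π ζ * ∑ m ∈ Finset.range k, rho k π ω m / (ζ - (π m : ℂ)), (Pik k π ζ)⁻¹]
/-- The finite set `{π 0, …, π (s-1)}` regarded as a finite subset of `ℂ`. -/
def Zset (π : ℕ → ℝ) (s : ℕ) : Finset ℂ :=
  (Finset.range s).image fun x => (π x : ℂ)

open Bornology Finset

section FiniteSubsets

variable (Z : Finset ℂ)

theorem Finset.eventually_nhdsNE_notMem (x : ℂ) : ∀ᶠ ζ in 𝓝[≠] x, ζ ∉ (Z : Set ℂ) :=
  nhdsNE_le_cofinite x Z.eventually_cofinite_notMem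

theorem Finset.compl_union_singleton_mem_nhds (x : ℂ) : (↑Z : Set ℂ)ᶜ ∪ {x} ∈ 𝓝 x := by
  rw [← nhdsNE_sup_pure]
  exact ⟨mem_of_superset (Z.eventually_nhdsNE_notMem x) fun ζ hζ => Or.inl hζ, by simp⟩

theorem Finset.compl_coe_mem_cobounded : (↑Z : Set ℂ)ᶜ ∈ cobounded ℂ :=
  le_cofinite ℂ Z.eventually_cofinite_notMem

end FiniteSubsets

theorem exists_differentiable_eqOn_of_tendsto_sub_mul {Z : Finset ℂ} {f : ℂ → ℂ}
    (hf : DifferentiableOn ℂ f (↑Z)ᶜ)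
    (hZ : ∀ x ∈ Z, Tendsto (fun ζ => (ζ - x) * f ζ) (𝓝[≠] x) (𝓝 0)) :
    ∃ F : ℂ → ℂ, Differentiable ℂ F ∧ Set.EqOn F f (↑Z)ᶜ := by
  classical
  refine ⟨fun ζ => if ζ ∈ Z then limUnder (𝓝[≠] ζ) f else f ζ, fun x => ?_,
    fun ζ hζ => if_neg hζ⟩
  by_cases hx : x ∈ Z
  · have hU := Z.compl_union_singleton_mem_nhds x
    have hsmall : (fun ζ => f ζ - f x) =o[𝓝[≠] x] fun ζ => (ζ - x)⁻¹ := by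
      refine (Asymptotics.isLittleO_iff_tendsto' (eventually_nhdsWithin_of_forall fun ζ hζ h =>
        absurd (inv_eq_zero.1 h) (sub_ne_zero.2 hζ))).2 ?_
      have hlin : Tendsto (fun ζ => (ζ - x) * f x) (𝓝[≠] x) (𝓝 0) :=
        tendsto_nhdsWithin_of_tendsto_nhds
          (((continuous_sub_right x).mul continuous_const).tendsto' x 0 (by simp))
      have hdiff := (hZ x hx).sub hlin
      rw [sub_zero] at hdiff
      refine hdiff.congr fun ζ => ?_
      simp only [div_inv_eq_mul]
      ring
    have hext := Complex.differentiableOn_update_limUnder_of_isLittleO hU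
      (hf.mono fun ζ hζ => hζ.1.resolve_right hζ.2) hsmall
    refine (hext.differentiableAt hU).congr_of_eventuallyEq ?_
    filter_upwards [hU] with ζ hζ
    rcases eq_or_ne ζ x with rfl | hne
    · simp [hx]
    · have hζZ : ζ ∉ Z := hζ.resolve_right hne
      simp [hζZ, Function.update_of_ne hne]
  · have hU := Z.isClosed.isOpen_compl.mem_nhds hx
    refine (hf.differentiableAt hU).congr_of_eventuallyEq ?_
    filter_upwards [hU] with ζ hζ
    exact if_neg hζ

theorem Differentiable.eq_zero_of_tendsto_cobounded {f : ℂ → ℂ} (hf : Differentiable ℂ f)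
    (h : Tendsto f (cobounded ℂ) (𝓝 0)) (z : ℂ) : f z = 0 :=
  hf.apply_eq_of_tendsto_cocompact z (Metric.cobounded_eq_cocompact (α := ℂ) ▸ h)

theorem Differentiable.exists_eq_prod_sub_mul {f : ℂ → ℂ} (hf : Differentiable ℂ f)
    (s : Finset ℂ) (hs : ∀ p ∈ s, f p = 0) :
    ∃ g : ℂ → ℂ, Differentiable ℂ g ∧ ∀ z, f z = (∏ p ∈ s, (z - p)) * g z := by
  classical
  induction s using Finset.induction_on with
  | empty => exact ⟨f, hf, by simp⟩
  | insert a s ha ih =>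
    obtain ⟨g, hg, hfg⟩ := ih fun p hp => hs p (mem_insert_of_mem hp)
    have hga : g a = 0 := by
      have hprod : ∏ p ∈ s, (a - p) ≠ 0 :=
        prod_ne_zero_iff.2 fun p hp => sub_ne_zero.2 (ne_of_mem_of_not_mem hp ha).symm
      have hfa := hfg a
      rw [hs a (mem_insert_self a s)] at hfa
      exact (mul_eq_zero.1 hfa.symm).resolve_left hprod
    refine ⟨dslope g a, differentiableOn_univ.1 <|
      (Complex.differentiableOn_dslope univ_mem).2 hg.differentiableOn, fun z => ?_⟩
    have := sub_smul_dslope g a z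
    rw [hga, sub_zero, smul_eq_mul] at this
    rw [hfg, prod_insert ha, ← this]
    ring

theorem tendsto_prod_sub_mul_inv_pow {ι : Type*} (s : Finset ι) (a : ι → ℂ) :
    Tendsto (fun ζ => (∏ i ∈ s, (ζ - a i)) * ζ⁻¹ ^ #s) (cobounded ℂ) (𝓝 1) := by
  have hfactor : ∀ i ∈ s, Tendsto (fun ζ => (ζ - a i) * ζ⁻¹) (cobounded ℂ) (𝓝 1) := by
    intro i _
    have h := tendsto_const_nhds (x := (1 : ℂ)).sub (tendsto_inv₀_cobounded.const_mul (a i))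
    rw [mul_zero, sub_zero] at h
    refine h.congr' ?_
    filter_upwards [eventually_ne_cobounded 0] with ζ hζ
    field_simp
  simpa [prod_mul_distrib] using tendsto_finsetProd s hfactor

theorem Differentiable.eq_zero_of_tendsto_mul_inv_pow {f : ℂ → ℂ} (hf : Differentiable ℂ f)
    (s : Finset ℂ) (hs : ∀ p ∈ s, f p = 0)
    (hinf : Tendsto (fun ζ => f ζ * ζ⁻¹ ^ #s) (cobounded ℂ) (𝓝 0)) (z : ℂ) : f z = 0 := by
  obtain ⟨g, hg, hfg⟩ := hf.exists_eq_prod_sub_mul s hs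
  have hprod := tendsto_prod_sub_mul_inv_pow s fun p => p
  have hg0 : Tendsto g (cobounded ℂ) (𝓝 0) := by
    have hquot := hinf.div hprod one_ne_zero
    rw [zero_div] at hquot
    refine hquot.congr' ?_
    filter_upwards [hprod.eventually_ne one_ne_zero] with ζ hζ
    rw [Pi.div_apply, hfg, mul_right_comm, mul_div_cancel_left₀ _ hζ]
  rw [hfg, hg.eq_zero_of_tendsto_cobounded hg0, mul_zero]

theorem eqOn_zero_of_tendsto_sub_mul_of_tendsto_mul_pow {Z : Finset ℂ} {f : ℂ → ℂ}
    (hf : DifferentiableOn ℂ f (↑Z)ᶜ)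
    (hpole : ∀ x ∈ Z, ∃ r, Tendsto (fun ζ => (ζ - x) * f ζ) (𝓝[≠] x) (𝓝 r))
    (hinf : Tendsto (fun ζ => f ζ * ζ ^ #Z) (cobounded ℂ) (𝓝 0)) : Set.EqOn f 0 (↑Z)ᶜ := by
  set P : ℂ → ℂ := fun ζ => ∏ p ∈ Z, (ζ - p) with hP_def
  have hP : Differentiable ℂ P := by fun_prop
  obtain ⟨F, hF, hFf⟩ := exists_differentiable_eqOn_of_tendsto_sub_mul (f := fun ζ => f ζ * P ζ)
    (hf.mul hP.differentiableOn) fun x hx => by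
      obtain ⟨r, hr⟩ := hpole x hx
      have hPx : Tendsto P (𝓝[≠] x) (𝓝 0) :=
        tendsto_nhdsWithin_of_tendsto_nhds
          (hP.continuous.tendsto' x 0 (prod_eq_zero hx (sub_self x)))
      simpa [mul_assoc] using hr.mul hPx
  have hF0 : Tendsto F (cobounded ℂ) (𝓝 0) := by
    have hlim := hinf.mul (tendsto_prod_sub_mul_inv_pow Z fun p => p)
    rw [zero_mul] at hlim
    refine hlim.congr' ?_
    filter_upwards [Z.compl_coe_mem_cobounded, eventually_ne_cobounded 0] with ζ hζ h0
    rw [hFf hζ, mul_mul_mul_comm, ← mul_pow, mul_inv_cancel₀ h0, one_pow, mul_one]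
  intro ζ hζ
  have hPζ : P ζ ≠ 0 := prod_ne_zero_iff.2 fun p hp => sub_ne_zero.2 fun h => hζ (h ▸ hp)
  have hfP : f ζ * P ζ = 0 := (hFf hζ).symm.trans (hF.eq_zero_of_tendsto_cobounded hF0 ζ)
  exact (mul_eq_zero.1 hfP).resolve_right hPζ

theorem eqOn_zero_of_tendsto_zero_of_tendsto_mul_inv_pow {Z : Finset ℂ} {f : ℂ → ℂ}
    (hf : DifferentiableOn ℂ f (↑Z)ᶜ) (hZ : ∀ x ∈ Z, Tendsto f (𝓝[≠] x) (𝓝 0))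
    (hinf : Tendsto (fun ζ => f ζ * ζ⁻¹ ^ #Z) (cobounded ℂ) (𝓝 0)) : Set.EqOn f 0 (↑Z)ᶜ := by
  obtain ⟨F, hF, hFf⟩ := exists_differentiable_eqOn_of_tendsto_sub_mul hf fun x hx => by
    simpa using (tendsto_nhdsWithin_of_tendsto_nhds
      ((continuous_sub_right x).tendsto' x 0 (sub_self x))).mul (hZ x hx)
  have hFZ : ∀ x ∈ Z, F x = 0 := fun x hx =>
    tendsto_nhds_unique (hF.continuous.continuousAt.tendsto.mono_left nhdsWithin_le_nhds)
      ((hZ x hx).congr' (by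
        filter_upwards [Z.eventually_nhdsNE_notMem x] with ζ hζ using (hFf hζ).symm))
  have hFinf : Tendsto (fun ζ => F ζ * ζ⁻¹ ^ #Z) (cobounded ℂ) (𝓝 0) := by
    refine hinf.congr' ?_
    filter_upwards [Z.compl_coe_mem_cobounded] with ζ hζ
    rw [hFf hζ]
  intro ζ hζ
  rw [← hFf hζ]
  exact hF.eq_zero_of_tendsto_mul_inv_pow Z hFZ hFinf ζ

theorem EntryDiffOn.sub {m₁ m₂ : ℂ → Mat2} {U : Set ℂ} (h₁ : EntryDiffOn m₁ U)
    (h₂ : EntryDiffOn m₂ U) : EntryDiffOn (m₁ - m₂) U :=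
  fun i j => (h₁ i j).sub (h₂ i j)

theorem entryDiffOn_of {a b c d : ℂ → ℂ} {U : Set ℂ} (ha : DifferentiableOn ℂ a U)
    (hb : DifferentiableOn ℂ b U) (hc : DifferentiableOn ℂ c U) (hd : DifferentiableOn ℂ d U) :
    EntryDiffOn (fun ζ => !![a ζ, b ζ; c ζ, d ζ]) U := by
  intro i j
  fin_cases i <;> fin_cases j <;> simpa

theorem SolvesDRHP.sub {Z : Finset ℂ} {w m₁ m₂ : ℂ → Mat2} (h₁ : SolvesDRHP Z w m₁)
    (h₂ : SolvesDRHP Z w m₂) : SolvesDRHP Z w (m₁ - m₂) := by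
  refine ⟨h₁.1.sub h₂.1, fun x hx => ?_⟩
  obtain ⟨g₁, hg₁, hg₁m, hg₁w⟩ := h₁.2 x hx
  obtain ⟨g₂, hg₂, hg₂m, hg₂w⟩ := h₂.2 x hx
  refine ⟨g₁ - g₂, hg₁.sub hg₂, fun ζ hζ => ?_, ?_⟩
  · simp [hg₁m ζ hζ, hg₂m ζ hζ, smul_sub]
  · simpa [sub_mul] using hg₁w.sub hg₂w

theorem SolvesDRHP.exists_tendsto_residue {Z : Finset ℂ} {w m : ℂ → Mat2}
    (h : SolvesDRHP Z w m) {x : ℂ} (hx : x ∈ Z) :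
    ∃ R : Mat2, Tendsto (fun ζ => (ζ - x) • m ζ) (𝓝[≠] x) (𝓝 R) ∧
      Tendsto (fun ζ => m ζ * w x) (𝓝[≠] x) (𝓝 R) := by
  obtain ⟨g, hg, hgm, hgw⟩ := h.2 x hx
  refine ⟨g x, ?_, hgw⟩
  have hcont : Tendsto g (𝓝 x) (𝓝 (g x)) :=
    tendsto_pi_nhds.2 fun i => tendsto_pi_nhds.2 fun j =>
      ((hg i j).differentiableAt (Z.compl_union_singleton_mem_nhds x)).continuousAt
  refine (hcont.mono_left nhdsWithin_le_nhds).congr' ?_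
  filter_upwards [Z.eventually_nhdsNE_notMem x] with ζ hζ using hgm ζ hζ

theorem SolvesDRHP.eqOn_zero {Z : Finset ℂ} {w d : ℂ → Mat2}
    (hw : ∀ x ∈ Z, ∃ c ≠ 0, w x = !![0, c; 0, 0]) (hd : SolvesDRHP Z w d)
    (hinf : Tendsto (fun ζ => d ζ * diagonal ![ζ⁻¹ ^ #Z, ζ ^ #Z]) (cobounded ℂ) (𝓝 0)) :
    Set.EqOn d 0 (↑Z)ᶜ := by
  have hentry (i j : Fin 2) := (hinf.apply_nhds i).apply_nhds j
  simp only [mul_diagonal] at hentry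
  have hcol₁ (i : Fin 2) : Set.EqOn (fun ζ => d ζ i 1) 0 (↑Z)ᶜ := by
    refine eqOn_zero_of_tendsto_sub_mul_of_tendsto_mul_pow (hd.1 i 1) (fun x hx => ?_)
      (by simpa using hentry i 1)
    obtain ⟨R, hR, -⟩ := hd.exists_tendsto_residue hx
    exact ⟨R i 1, by simpa using (hR.apply_nhds i).apply_nhds 1⟩
  -- At `x ∈ Z` the `(i,1)` entry of the jump condition reads `d_{i0} c → R_{i1}`, and
  -- `R_{i1} = 0` because column 1 vanishes.
  have hcol₀ (i : Fin 2) : Set.EqOn (fun ζ => d ζ i 0) 0 (↑Z)ᶜ := by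
    refine eqOn_zero_of_tendsto_zero_of_tendsto_mul_inv_pow (hd.1 i 0) (fun x hx => ?_)
      (by simpa using hentry i 0)
    obtain ⟨R, hR, hRw⟩ := hd.exists_tendsto_residue hx
    obtain ⟨c, hc, hwx⟩ := hw x hx
    have hR₁ : R i 1 = 0 := by
      refine tendsto_nhds_unique ((hR.apply_nhds i).apply_nhds 1) (tendsto_const_nhds.congr' ?_)
      filter_upwards [Z.eventually_nhdsNE_notMem x] with ζ hζ
      simp [hcol₁ i hζ]
    have hjump : Tendsto (fun ζ => d ζ i 0 * c) (𝓝[≠] x) (𝓝 0) := by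
      simpa [hwx, mul_apply, Fin.sum_univ_two, hR₁] using (hRw.apply_nhds i).apply_nhds 1
    simpa [hc] using hjump.mul_const c⁻¹
  intro ζ hζ
  ext i j
  fin_cases j
  exacts [hcol₀ i hζ, hcol₁ i hζ]

theorem SolvesDRHP.eqOn_of_asympId {Z : Finset ℂ} {w m₁ m₂ : ℂ → Mat2}
    (hw : ∀ x ∈ Z, ∃ c ≠ 0, w x = !![0, c; 0, 0])
    (h₁ : SolvesDRHP Z w m₁) (h₂ : SolvesDRHP Z w m₂)
    (hm₁ : AsympId #Z m₁) (hm₂ : AsympId #Z m₂) : Set.EqOn m₁ m₂ (↑Z)ᶜ := by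
  have hd := (h₁.sub h₂).eqOn_zero hw (by simpa [sub_mul] using hm₁.sub hm₂)
  exact fun ζ hζ => sub_eq_zero.1 (hd hζ)

/-- The polynomial `Π(ζ) ∑ ρ_m / (ζ - π_m)`, i.e. the `(2,1)` entry of `m_k` off the poles. -/
def rhoPoly (k : ℕ) (π ω : ℕ → ℝ) (ζ : ℂ) : ℂ :=
  ∑ m ∈ range k, rho k π ω m * ∏ j ∈ (range k).erase m, (ζ - π j)

theorem tendsto_Pik_mul_inv_pow (k : ℕ) (π : ℕ → ℝ) :
    Tendsto (fun ζ => Pik k π ζ * ζ⁻¹ ^ k) (cobounded ℂ) (𝓝 1) := by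
  simpa [Pik] using tendsto_prod_sub_mul_inv_pow (range k) fun j => (π j : ℂ)

theorem differentiable_Pik (k : ℕ) (π : ℕ → ℝ) : Differentiable ℂ (Pik k π) := by
  unfold Pik
  fun_prop

theorem differentiable_rhoPoly (k : ℕ) (π ω : ℕ → ℝ) : Differentiable ℂ (rhoPoly k π ω) := by
  unfold rhoPoly
  fun_prop

section ExplicitSolution

variable {k : ℕ} {π ω : ℕ → ℝ}

theorem mem_Zset {x : ℂ} : x ∈ Zset π k ↔ ∃ j < k, (π j : ℂ) = x := by
  simp [Zset]

theorem card_Zset (hπ : ∀ i < k, ∀ j < k, π i = π j → i = j) : #(Zset π k) = k := by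
  rw [Zset, card_image_of_injOn, card_range]
  intro i hi j hj hij
  exact hπ i (mem_range.1 hi) j (mem_range.1 hj) (Complex.ofReal_injective hij)

theorem sub_ne_zero_of_notMem_Zset {ζ : ℂ} (hζ : ζ ∉ (Zset π k : Set ℂ)) {j : ℕ} (hj : j < k) :
    ζ - π j ≠ 0 :=
  sub_ne_zero.2 fun h => hζ (mem_Zset.2 ⟨j, hj, h.symm⟩)

theorem ofReal_sub_ne_zero (hπ : ∀ i < k, ∀ j < k, π i = π j → i = j) {i j : ℕ} (hi : i < k)
    (hj : j < k) (hij : i ≠ j) : (π i : ℂ) - π j ≠ 0 :=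
  sub_ne_zero.2 fun h => hij (hπ i hi j hj (Complex.ofReal_injective h))

theorem prod_erase_sub_ne_zero (hπ : ∀ i < k, ∀ j < k, π i = π j → i = j) {x : ℕ} (hx : x < k)
    {ζ : ℂ} (hζ : ζ ∈ (↑(Zset π k) : Set ℂ)ᶜ ∪ {(π x : ℂ)}) :
    ∏ j ∈ (range k).erase x, (ζ - π j) ≠ 0 := by
  refine prod_ne_zero_iff.2 fun j hj => ?_
  have hjk := mem_range.1 (mem_of_mem_erase hj)
  rcases hζ with hζ | rfl
  · exact sub_ne_zero_of_notMem_Zset hζ hjk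
  · exact ofReal_sub_ne_zero hπ hx hjk (ne_of_mem_erase hj).symm

theorem Pik_ne_zero {ζ : ℂ} (hζ : ζ ∉ (Zset π k : Set ℂ)) : Pik k π ζ ≠ 0 :=
  prod_ne_zero_iff.2 fun _ hj => sub_ne_zero_of_notMem_Zset hζ (mem_range.1 hj)

theorem Pik_eq_sub_mul_prod_erase {m : ℕ} (hm : m < k) (ζ : ℂ) :
    Pik k π ζ = (ζ - π m) * ∏ j ∈ (range k).erase m, (ζ - π j) :=
  (mul_prod_erase _ _ (mem_range.2 hm)).symm

theorem mkFun_eq {ζ : ℂ} (hζ : ζ ∉ (Zset π k : Set ℂ)) :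
    mkFun k π ω ζ = !![Pik k π ζ, 0; rhoPoly k π ω ζ, (Pik k π ζ)⁻¹] := by
  have h₂₁ : Pik k π ζ * ∑ m ∈ range k, rho k π ω m / (ζ - π m) = rhoPoly k π ω ζ := by
    rw [rhoPoly, mul_sum]
    refine sum_congr rfl fun m hm => ?_
    have hm' := mem_range.1 hm
    rw [Pik_eq_sub_mul_prod_erase hm']
    field_simp [sub_ne_zero_of_notMem_Zset hζ hm']
  rw [mkFun, h₂₁]

theorem ofReal_mul_rhoPoly (hπ : ∀ i < k, ∀ j < k, π i = π j → i = j) {x : ℕ} (hx : x < k)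
    (hωx : ω x ≠ 0) :
    ω x * rhoPoly k π ω (π x) = (∏ j ∈ (range k).erase x, ((π x : ℂ) - π j))⁻¹ := by
  have hne : ∀ j ∈ (range k).erase x, (π x : ℂ) - π j ≠ 0 := fun j hj =>
    ofReal_sub_ne_zero hπ hx (mem_range.1 (mem_of_mem_erase hj)) (ne_of_mem_erase hj).symm
  rw [rhoPoly, sum_eq_single x, rho, ← mul_assoc, ← mul_assoc,
    mul_inv_cancel₀ (Complex.ofReal_ne_zero.2 hωx), one_mul, ← prod_inv_distrib,
    ← prod_mul_distrib]
  · exact prod_congr rfl fun j hj => by field_simp [hne j hj]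
  · exact fun m _ hmx => mul_eq_zero_of_right _ <|
      prod_eq_zero (mem_erase.2 ⟨Ne.symm hmx, mem_range.2 hx⟩) (sub_self _)
  · exact fun h => absurd (mem_range.2 hx) h

end ExplicitSolution

theorem entryDiffOn_mkFun (k : ℕ) (π ω : ℕ → ℝ) :
    EntryDiffOn (mkFun k π ω) (↑(Zset π k))ᶜ := by
  have hPik := (differentiable_Pik k π).differentiableOn (s := (↑(Zset π k))ᶜ)
  intro i j
  refine (entryDiffOn_of hPik (differentiableOn_const 0)
    (differentiable_rhoPoly k π ω).differentiableOn
    (hPik.inv fun ζ hζ => Pik_ne_zero hζ) i j).congr fun ζ hζ => ?_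
  simp [mkFun_eq hζ]

theorem asympId_mkFun (k : ℕ) (π ω : ℕ → ℝ) : AsympId k (mkFun k π ω) := by
  have hP := tendsto_Pik_mul_inv_pow k π
  have hsum : Tendsto (fun ζ => ∑ m ∈ range k, rho k π ω m / (ζ - π m)) (cobounded ℂ) (𝓝 0) := by
    simpa [div_eq_mul_inv] using tendsto_finsetSum (range k) fun m _ =>
      (tendsto_inv₀_cobounded.comp (tendsto_sub_const_cobounded (π m : ℂ))).const_mul
        (rho k π ω m)
  refine tendsto_pi_nhds.2 fun i => tendsto_pi_nhds.2 fun j => ?_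
  fin_cases i <;> fin_cases j <;> simp [mkFun, mul_diagonal]
  · simpa using hP
  · simpa [mul_right_comm] using hP.mul hsum
  · simpa [mul_comm] using hP.inv₀ one_ne_zero

theorem solvesDRHP_mkFun {k : ℕ} {π ω : ℕ → ℝ} (hπ : ∀ i < k, ∀ j < k, π i = π j → i = j)
    (hω : ∀ x < k, ω x ≠ 0) {w : ℂ → Mat2} (hw : ∀ x < k, w (π x : ℂ) = !![0, (ω x : ℂ); 0, 0]) :
    SolvesDRHP (Zset π k) w (mkFun k π ω) := by
  refine ⟨entryDiffOn_mkFun k π ω, fun x hx => ?_⟩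
  obtain ⟨x₀, hx₀, rfl⟩ := mem_Zset.1 hx
  have hPik := differentiable_Pik k π
  have hrho := differentiable_rhoPoly k π ω
  set P : ℂ → ℂ := fun ζ => ∏ j ∈ (range k).erase x₀, (ζ - π j) with hP_def
  have hP : Differentiable ℂ P := by fun_prop
  refine ⟨fun ζ => !![(ζ - π x₀) * Pik k π ζ, 0; (ζ - π x₀) * rhoPoly k π ω ζ, (P ζ)⁻¹],
    entryDiffOn_of (by fun_prop) (differentiableOn_const 0) (by fun_prop)
      (hP.differentiableOn.inv fun ζ hζ => prod_erase_sub_ne_zero hπ hx₀ hζ), fun ζ hζ => ?_, ?_⟩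
  · have hsub := sub_ne_zero_of_notMem_Zset hζ hx₀
    ext i j
    fin_cases i <;> fin_cases j <;> simp [mkFun_eq hζ, Pik_eq_sub_mul_prod_erase hx₀, hP_def]
    field_simp
  · have hcont : Continuous fun ζ => !![0, ω x₀ * Pik k π ζ; 0, ω x₀ * rhoPoly k π ω ζ] := by
      have := hPik.continuous
      have := hrho.continuous
      fun_prop
    have hval : !![0, ω x₀ * Pik k π (π x₀); 0, ω x₀ * rhoPoly k π ω (π x₀)] =
        !![(π x₀ - π x₀) * Pik k π (π x₀), 0;
          (π x₀ - π x₀) * rhoPoly k π ω (π x₀), (P (π x₀))⁻¹] := by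
      rw [ofReal_mul_rhoPoly hπ hx₀ (hω x₀ hx₀), Pik_eq_sub_mul_prod_erase hx₀]
      simp [hP_def]
    have hlim := tendsto_nhdsWithin_of_tendsto_nhds (s := {(π x₀ : ℂ)}ᶜ) (hcont.tendsto (π x₀))
    rw [hval] at hlim
    refine hlim.congr' ?_
    filter_upwards [(Zset π k).eventually_nhdsNE_notMem _] with ζ hζ
    rw [mkFun_eq hζ, hw x₀ hx₀]
    ext i j
    fin_cases i <;> fin_cases j <;> simp [mul_comm]

theorem stmt12_general (k : ℕ)
    (π ω : ℕ → ℝ)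
    (hπ : ∀ i < k, ∀ j < k, π i = π j → i = j)
    (hω : ∀ x < k, 0 < ω x)
    (w : ℂ → Mat2) (hw : ∀ x < k, w (π x : ℂ) = !![0, (ω x : ℂ); 0, 0]) :
    (SolvesDRHP (Zset π k) w (mkFun k π ω) ∧ AsympId k (mkFun k π ω)) ∧
    (∀ m : ℂ → Mat2, SolvesDRHP (Zset π k) w m → AsympId k m →
      ∀ ζ ∉ (Zset π k : Set ℂ), m ζ = mkFun k π ω ζ) := by
  have hsol := solvesDRHP_mkFun hπ (fun x hx => (hω x hx).ne') hw
  have hasymp := asympId_mkFun k π ω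
  have hw' : ∀ x ∈ Zset π k, ∃ c ≠ 0, w x = !![0, c; 0, 0] := by
    intro x hx
    obtain ⟨j, hj, rfl⟩ := mem_Zset.1 hx
    exact ⟨ω j, Complex.ofReal_ne_zero.2 (hω j hj).ne', hw j hj⟩
  refine ⟨⟨hsol, hasymp⟩, fun m hm hmA => hm.eqOn_of_asympId hw' hsol ?_ ?_⟩ <;>
    rwa [card_Zset hπ]

/-- the explicit matrix `m_k` is the unique solution of the DRHP on
`{π₀,…,π_{k−1}}` with the asymptotics `diag(ζ^k, ζ^{−k})` at infinity. -/
theorem stmt12 (k : ℕ) (hk : 1 ≤ k)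
    (π ω : ℕ → ℝ)
    (hπ : ∀ i < k, ∀ j < k, π i = π j → i = j)
    (hω : ∀ x < k, 0 < ω x)
    (w : ℂ → Mat2) (hw : ∀ x < k, w (π x : ℂ) = !![0, (ω x : ℂ); 0, 0]) :
    (SolvesDRHP (Zset π k) w (mkFun k π ω) ∧ AsympId k (mkFun k π ω)) ∧
    (∀ m : ℂ → Mat2, SolvesDRHP (Zset π k) w m → AsympId k m →
      ∀ ζ ∉ (Zset π k : Set ℂ), m ζ = mkFun k π ω ζ) :=
  stmt12_general k π ω hπ hω w hw
end
end

section
/- Let π_0,…,π_N be distinct reals, ω(0),…,ω(N) strictly positive reals, 1 ≤ k ≤ N, let {P_n}_{n=0}^N be the monic orthogonal polynomials for (f,g)_ω = Σ_{x=0}^N f(π_x)g(π_x)ω(x), let Z = ∏_{i=0}^{k−1}(P_i,P_i)_ω, and let D_s be the determinants defined via the Christoffel–Darboux kernel. Let q_k = (Σ_{m=0}^{k} [ω(m)^{−1}·∏_{0≤j≤k, j≠m}(π_m−π_j)^{−2}])^{−1}. Then D_k = Z^{−1}·∏_{0≤i<j≤k−1}(π_i−π_j)²·∏_{l=0}^{k−1}ω(l),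 and D_{k+1} = ω(k)·q_k^{−1}·D_k·∏_{l=0}^{k−1}(π_k−π_l)². -/
open Filter Topology Matrix Polynomial

noncomputable section

/-- The inner product `(f,g)_ω = Σ_{x=0}^{N} f(π x) g(π x) ω x` on complex polynomials,
for real points `π` and real weights `ω`. -/
def ipR (N : ℕ) (π ω : ℕ → ℝ) (f g : Polynomial ℂ) : ℂ :=
  ∑ x ∈ Finset.range (N + 1), f.eval (π x : ℂ) * g.eval (π x : ℂ) * (ω x : ℂ)

/-- The Christoffel–Darboux kernel built from `P = P_k`, `Q = P_{k-1}` and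
`c = (P_{k-1},P_{k-1})_ω⁻¹`. -/
def CDker (π ω : ℕ → ℝ) (c : ℂ) (P Q : Polynomial ℂ) (x y : ℕ) : ℂ :=
  if x = y then
    c * (ω x : ℂ) *
      ((Polynomial.derivative P).eval (π x : ℂ) * Q.eval (π x : ℂ) -
        (Polynomial.derivative Q).eval (π x : ℂ) * P.eval (π x : ℂ))
  else
    c * (Real.sqrt (ω x * ω y) : ℂ) *
      (P.eval (π x : ℂ) * Q.eval (π y : ℂ) - Q.eval (π x : ℂ) * P.eval (π y : ℂ)) /
      ((π x : ℂ) - (π y : ℂ))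

/-- The Fredholm determinant `D_s = det(Id - K|_{{s,…,N}×{s,…,N}})`. -/
def Dfred (N s : ℕ) (K : ℕ → ℕ → ℂ) : ℂ :=
  Matrix.det (1 - Matrix.of fun i j : Fin (N + 1 - s) => K (s + i) (s + j))

/-!
By the Christoffel–Darboux formula, which follows from the three-term recurrence, the kernel is
`K(x,y) = √(ω x ω y) Σ_{n<k} P_n(π_x) P_n(π_y) / (P_n,P_n)_ω`, so its restriction to the nodes
`s, …, N` is a product `A B` through `ℂ^k`. The Weinstein–Aronszajn identity
`det(1 - A B) = det(1 - B A)` then gives `D_s = Z⁻¹ det G_s`, where `G_s` is the Gram matrix of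
`P_0, …, P_{k-1}` for the inner product truncated to the nodes `0, …, s - 1`.

For `s = k`, `G_k = Vᵀ diag(ω) V` with `V = (P_n(π_x))`, and `det V` is the Vandermonde
determinant because the `P_n` are monic of degree `n`. For `s = k + 1` the new node adds the
rank-one term `ω_k u uᵀ` with `u = (P_n(π_k))_n = Vᵀ ℓ`, where `ℓ_x` is the Lagrange basis of the
nodes `π_0, …, π_{k-1}` evaluated at `π_k`. The matrix determinant lemma yields the factor
`1 + ω_k Σ_x ℓ_x² / ω_x`, which is `ω_k q_k⁻¹ ∏_l (π_k - π_l)²`.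
The Gram matrix of all of `P_0, …, P_N` on all nodes is `diag((P_n,P_n)_ω)`, and the same
Vandermonde computation shows that no `(P_n,P_n)_ω` vanishes.
-/

open Finset

section InnerProduct

variable {N : ℕ} {π ω : ℕ → ℝ}

theorem ipR_comm (f g : ℂ[X]) : ipR N π ω f g = ipR N π ω g f :=
  sum_congr rfl fun _ _ => by ring

theorem ipR_sub_left (f g h : ℂ[X]) :
    ipR N π ω (f - g) h = ipR N π ω f h - ipR N π ω g h := by
  simp only [ipR, eval_sub, sub_mul, sum_sub_distrib]

theorem ipR_C_mul_left (a : ℂ) (f g : ℂ[X]) : ipR N π ω (C a * f) g = a * ipR N π ω f g := by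
  simp only [ipR, eval_mul, eval_C, mul_sum, mul_assoc]

theorem ipR_sum_left (s : Finset ℕ) (f : ℕ → ℂ[X]) (g : ℂ[X]) :
    ipR N π ω (∑ i ∈ s, f i) g = ∑ i ∈ s, ipR N π ω (f i) g := by
  simp only [ipR, eval_finsetSum, sum_mul]
  exact sum_comm

theorem ipR_X_mul_left (f g : ℂ[X]) : ipR N π ω (X * f) g = ipR N π ω f (X * g) :=
  sum_congr rfl fun _ _ => by simp only [eval_mul, eval_X]; ring

end InnerProduct

section MonicBasis

variable {R : Type*} [Ring R]

theorem degree_sub_C_coeff_mul_lt {p f : R[X]} {d : ℕ} (hp : p.Monic) (hpd : p.natDegree = d)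
    (hf : f.degree < ↑(d + 1)) : (f - C (f.coeff d) * p).degree < d := by
  rw [degree_lt_iff_coeff_zero]
  intro m hm
  rw [coeff_sub, coeff_C_mul]
  rcases hm.eq_or_lt with rfl | hlt
  · rw [← hpd, hp.coeff_natDegree, mul_one, sub_self]
  · rw [coeff_eq_zero_of_degree_lt (hf.trans_le (by exact_mod_cast hlt)),
      coeff_eq_zero_of_natDegree_lt (p := p) (hpd ▸ hlt), mul_zero, sub_zero]

theorem degree_X_mul_of_monic [Nontrivial R] {p : R[X]} {n : ℕ} (hp : p.Monic)
    (hpn : p.natDegree = n) : (X * p).degree = ↑(n + 1) := by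
  rw [X_mul, degree_mul_X, degree_eq_natDegree hp.ne_zero, hpn]
  rfl

theorem degree_X_mul_sub_lt [Nontrivial R] {p q : R[X]} {n : ℕ} (hp : p.Monic)
    (hpn : p.natDegree = n) (hq : q.Monic) (hqn : q.natDegree = n + 1) :
    (X * p - q).degree < ↑(n + 1) := by
  have hXp : (X * p).degree < ↑(n + 1 + 1) := by
    rw [degree_X_mul_of_monic hp hpn]
    exact_mod_cast Nat.lt_succ_self _
  simpa [coeff_X_mul, ← hpn, hp.coeff_natDegree] using degree_sub_C_coeff_mul_lt hq hqn hXp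

theorem exists_eq_sum_C_mul_of_degree_lt {P : ℕ → R[X]} :
    ∀ {d : ℕ}, (∀ n < d, (P n).Monic ∧ (P n).natDegree = n) → ∀ {f : R[X]}, f.degree < d →
      ∃ c : ℕ → R, f = ∑ i ∈ range d, C (c i) * P i
  | 0, _, f, hf => ⟨0, by simpa using hf⟩
  | d + 1, hP, f, hf => by
    obtain ⟨c, hc⟩ := exists_eq_sum_C_mul_of_degree_lt (fun n hn => hP n (by omega))
      (degree_sub_C_coeff_mul_lt (hP d d.lt_succ_self).1 (hP d d.lt_succ_self).2 hf)
    refine ⟨Function.update c d (f.coeff d), ?_⟩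
    rw [sum_range_succ, Function.update_self, sum_congr rfl fun i hi => by
      rw [Function.update_of_ne (mem_range.1 hi).ne], ← hc, sub_add_cancel]

end MonicBasis

theorem det_vandermonde_sq {R : Type*} [CommRing R] (r : ℕ) (v : ℕ → R) :
    (Matrix.vandermonde fun x : Fin r => v x).det ^ 2 =
      ∏ j ∈ range r, ∏ i ∈ range j, (v i - v j) ^ 2 := by
  rw [Matrix.det_vandermonde, ← prod_pow]
  have hIoi (i : Fin r) :
      (∏ j ∈ Ioi i, (v j - v i)) ^ 2 = ∏ j ∈ Ioo (i : ℕ) r, (v j - v i) ^ 2 := by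
    rw [← prod_pow, ← Fin.map_valEmbedding_Ioi, prod_map]
    rfl
  rw [prod_congr rfl fun i _ => hIoi i,
    Fin.prod_univ_eq_prod_range (fun i => ∏ j ∈ Ioo i r, (v j - v i) ^ 2)]
  rw [prod_comm' (t' := range r) (s' := fun j => range j) fun i j => by
    simp only [mem_range, mem_Ioo]; omega]
  exact prod_congr rfl fun j _ => prod_congr rfl fun i _ => by ring

theorem Matrix.det_diagonal_add_vecMulVec {ι K : Type*} [Fintype ι] [DecidableEq ι] [Field K]
    {d : ι → K} (hd : ∀ i, d i ≠ 0) (u v : ι → K) :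
    (Matrix.diagonal d + Matrix.vecMulVec u v).det = (∏ i, d i) * (1 + ∑ i, u i * v i / d i) := by
  have hfac : Matrix.diagonal d + Matrix.vecMulVec u v = Matrix.diagonal d *
      (1 + Matrix.replicateCol (Fin 1) (fun i => u i / d i) * Matrix.replicateRow (Fin 1) v) := by
    rw [Matrix.mul_add, Matrix.mul_one, ← Matrix.mul_assoc, Matrix.vecMulVec_eq (Fin 1)]
    congr 2
    ext i j
    rw [Matrix.diagonal_mul, Matrix.replicateCol_apply, Matrix.replicateCol_apply,
      mul_div_cancel₀ _ (hd i)]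
  rw [hfac, Matrix.det_mul, Matrix.det_diagonal, Matrix.det_one_add_mul_comm, Matrix.det_unique]
  simp only [Matrix.add_apply, Matrix.one_apply_eq, Matrix.mul_apply, Matrix.replicateCol_apply,
    Matrix.replicateRow_apply]
  congr 2
  exact sum_congr rfl fun i _ => by ring

theorem Lagrange.eval_eq_sum_mul_eval_basis {F ι : Type*} [Field F] [DecidableEq ι] {s : Finset ι}
    {v : ι → F} (hvs : Set.InjOn v s) {f : F[X]} (hf : f.degree < #s) (z : F) :
    f.eval z = ∑ i ∈ s, f.eval (v i) * (Lagrange.basis s v i).eval z := by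
  conv_lhs => rw [Lagrange.eq_interpolate hvs hf]
  simp only [Lagrange.interpolate_apply, eval_finsetSum, eval_mul, eval_C]

theorem Lagrange.eval_basis_eq_prod {F ι : Type*} [Field F] [DecidableEq ι] (s : Finset ι)
    (v : ι → F) (i : ι) (z : F) :
    (Lagrange.basis s v i).eval z = ∏ j ∈ s.erase i, (z - v j) / (v i - v j) := by
  simp only [Lagrange.basis, Lagrange.basisDivisor, eval_prod, eval_mul, eval_C, eval_sub, eval_X]
  exact prod_congr rfl fun j _ => by ring

theorem one_add_mul_sum_eval_basis_sq {F : Type*} [Field F] {r : ℕ} {v w : ℕ → F}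
    (hv : ∀ x < r, v x ≠ v r) (hw : w r ≠ 0) :
    1 + w r * ∑ x ∈ range r, ((Lagrange.basis (range r) v x).eval (v r)) ^ 2 / w x =
      w r * (∑ m ∈ range (r + 1),
        (w m)⁻¹ * ∏ j ∈ (range (r + 1)).erase m, ((v m - v j) ^ 2)⁻¹) *
          ∏ l ∈ range r, (v r - v l) ^ 2 := by
  have hnodes : ∏ l ∈ range r, (v r - v l) ^ 2 ≠ 0 :=
    prod_ne_zero_iff.2 fun l hl => pow_ne_zero _ (sub_ne_zero.2 (hv l (mem_range.1 hl)).symm)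
  have hlast : w r * ((w r)⁻¹ * ∏ j ∈ (range (r + 1)).erase r, ((v r - v j) ^ 2)⁻¹) *
      ∏ l ∈ range r, (v r - v l) ^ 2 = 1 := by
    rw [range_add_one, erase_insert notMem_range_self, prod_inv_distrib, mul_inv_cancel_left₀ hw,
      inv_mul_cancel₀ hnodes]
  have hterm (x : ℕ) (hx : x ∈ range r) :
      w r * (((Lagrange.basis (range r) v x).eval (v r)) ^ 2 / w x) =
        w r * ((w x)⁻¹ * ∏ j ∈ (range (r + 1)).erase x, ((v x - v j) ^ 2)⁻¹) *
          ∏ l ∈ range r, (v r - v l) ^ 2 := by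
    have hxr : x < r := mem_range.1 hx
    have hcancel : ((v x - v r) ^ 2)⁻¹ * (v r - v x) ^ 2 = 1 := by
      rw [← neg_sub, neg_sq]
      exact inv_mul_cancel₀ (pow_ne_zero _ (sub_ne_zero.2 (hv x hxr).symm))
    have herase : (range (r + 1)).erase x = insert r ((range r).erase x) := by
      ext j
      simp only [mem_erase, mem_insert, mem_range]
      omega
    rw [Lagrange.eval_basis_eq_prod, herase, prod_insert (by simp), ← mul_prod_erase _ _ hx,
      ← prod_pow]
    simp only [div_eq_mul_inv, prod_mul_distrib, prod_inv_distrib, mul_pow, inv_pow]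
    linear_combination -w r * (w x)⁻¹ * (∏ j ∈ (range r).erase x, (v x - v j) ^ 2)⁻¹ *
      (∏ j ∈ (range r).erase x, (v r - v j) ^ 2) * hcancel
  rw [sum_range_succ, mul_add, add_mul, hlast, add_comm, mul_sum, mul_sum, sum_mul,
    sum_congr rfl hterm]

section OrthogonalPolynomials

variable {N : ℕ} {π ω : ℕ → ℝ} {P : ℕ → ℂ[X]}

theorem ipR_sum_C_mul_left_eq (hPo : ∀ a ≤ N, ∀ b ≤ N, a ≠ b → ipR N π ω (P a) (P b) = 0)
    {d j : ℕ} (hd : d ≤ N + 1) (hj : j ≤ N) (c : ℕ → ℂ) :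
    ipR N π ω (∑ i ∈ range d, C (c i) * P i) (P j) =
      if j ∈ range d then c j * ipR N π ω (P j) (P j) else 0 := by
  rw [ipR_sum_left, ← sum_ite_eq (range d) j fun i => c i * ipR N π ω (P i) (P j)]
  refine sum_congr rfl fun i hi => ?_
  rw [ipR_C_mul_left]
  split_ifs with hij
  · rw [hij]
  · rw [hPo i (by have := mem_range.1 hi; omega) j hj (Ne.symm hij), mul_zero]

theorem ipR_eq_zero_of_degree_lt (hPm : ∀ n ≤ N, (P n).Monic ∧ (P n).natDegree = n)
    (hPo : ∀ a ≤ N, ∀ b ≤ N, a ≠ b → ipR N π ω (P a) (P b) = 0)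
    {n : ℕ} (hn : n ≤ N) {f : ℂ[X]} (hf : f.degree < n) : ipR N π ω f (P n) = 0 := by
  obtain ⟨c, rfl⟩ := exists_eq_sum_C_mul_of_degree_lt (fun i hi => hPm i (by omega)) hf
  rw [ipR_sum_C_mul_left_eq hPo (by omega) hn, if_neg (by simp)]

theorem eq_sum_ipR_div_mul_of_degree_lt (hPm : ∀ n ≤ N, (P n).Monic ∧ (P n).natDegree = n)
    (hPo : ∀ a ≤ N, ∀ b ≤ N, a ≠ b → ipR N π ω (P a) (P b) = 0)
    (hh : ∀ n ≤ N, ipR N π ω (P n) (P n) ≠ 0) {d : ℕ} (hd : d ≤ N + 1) {f : ℂ[X]}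
    (hf : f.degree < d) :
    f = ∑ i ∈ range d, C (ipR N π ω f (P i) / ipR N π ω (P i) (P i)) * P i := by
  obtain ⟨c, rfl⟩ := exists_eq_sum_C_mul_of_degree_lt (fun i hi => hPm i (by omega)) hf
  refine sum_congr rfl fun i hi => ?_
  have hiN : i ≤ N := by have := mem_range.1 hi; omega
  rw [ipR_sum_C_mul_left_eq hPo hd hiN, if_pos hi, mul_div_cancel_right₀ _ (hh i hiN)]

theorem ipR_X_mul_left_eq_ipR_self (hPm : ∀ n ≤ N, (P n).Monic ∧ (P n).natDegree = n)
    (hPo : ∀ a ≤ N, ∀ b ≤ N, a ≠ b → ipR N π ω (P a) (P b) = 0) {n : ℕ} (hn : n + 1 ≤ N) :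
    ipR N π ω (X * P n) (P (n + 1)) = ipR N π ω (P (n + 1)) (P (n + 1)) := by
  rw [← sub_eq_zero, ← ipR_sub_left]
  exact ipR_eq_zero_of_degree_lt hPm hPo hn
    (degree_X_mul_sub_lt (hPm n (by omega)).1 (hPm n (by omega)).2 (hPm _ hn).1 (hPm _ hn).2)

theorem exists_three_term_recurrence (hPm : ∀ n ≤ N, (P n).Monic ∧ (P n).natDegree = n)
    (hPo : ∀ a ≤ N, ∀ b ≤ N, a ≠ b → ipR N π ω (P a) (P b) = 0)
    (hh : ∀ n ≤ N, ipR N π ω (P n) (P n) ≠ 0) {m : ℕ} (hm : m + 2 ≤ N) :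
    ∃ a : ℂ, X * P (m + 1) = P (m + 2) + C a * P (m + 1) +
      C (ipR N π ω (P (m + 1)) (P (m + 1)) / ipR N π ω (P m) (P m)) * P m := by
  -- `Q` has degree at most `m` and `(Q, P_i) = (X P_i, P_{m+1})`, which vanishes for `i < m`:
  -- only `P_m` survives in the expansion of `Q`.
  set R := X * P (m + 1) - P (m + 2)
  set Q := R - C (R.coeff (m + 1)) * P (m + 1)
  have hQ : Q.degree < ↑(m + 1) := degree_sub_C_coeff_mul_lt (hPm _ (by omega)).1
    (hPm _ (by omega)).2 (degree_X_mul_sub_lt (hPm _ (by omega)).1 (hPm _ (by omega)).2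
      (hPm _ hm).1 (hPm _ hm).2)
  have hQP : ∀ i ≤ m, ipR N π ω Q (P i) = ipR N π ω (X * P i) (P (m + 1)) := by
    intro i hi
    rw [ipR_sub_left, ipR_C_mul_left, ipR_sub_left, hPo (m + 1) (by omega) i (by omega) (by omega),
      hPo (m + 2) hm i (by omega) (by omega), ipR_X_mul_left, ipR_comm]
    ring
  have hlow : ∀ i ∈ range m, C (ipR N π ω Q (P i) / ipR N π ω (P i) (P i)) * P i = 0 := by
    intro i hi
    have hi : i < m := mem_range.1 hi
    have hdeg : (X * P i).degree < ↑(m + 1) := by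
      rw [degree_X_mul_of_monic (hPm i (by omega)).1 (hPm i (by omega)).2]
      exact_mod_cast Nat.succ_lt_succ hi
    rw [hQP i hi.le, ipR_eq_zero_of_degree_lt hPm hPo (by omega) hdeg, zero_div,
      C_0, zero_mul]
  have hexp := eq_sum_ipR_div_mul_of_degree_lt hPm hPo hh (by omega) hQ
  rw [sum_range_succ, sum_eq_zero hlow, zero_add, hQP m le_rfl,
    ipR_X_mul_left_eq_ipR_self hPm hPo (by omega)] at hexp
  exact ⟨R.coeff (m + 1), by linear_combination hexp⟩

theorem christoffel_darboux (hPm : ∀ n ≤ N, (P n).Monic ∧ (P n).natDegree = n)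
    (hPo : ∀ a ≤ N, ∀ b ≤ N, a ≠ b → ipR N π ω (P a) (P b) = 0)
    (hh : ∀ n ≤ N, ipR N π ω (P n) (P n) ≠ 0) :
    ∀ {t : ℕ}, t + 1 ≤ N → ∀ u v : ℂ,
      (P (t + 1)).eval u * (P t).eval v - (P t).eval u * (P (t + 1)).eval v =
        ipR N π ω (P t) (P t) * (u - v) *
          ∑ n ∈ range (t + 1), (P n).eval u * (P n).eval v / ipR N π ω (P n) (P n)
  | 0, hN, u, v => by
    have hP0 : P 0 = 1 := (hPm 0 (by omega)).1.natDegree_eq_zero.1 (hPm 0 (by omega)).2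
    have h0 : ipR N π ω 1 1 ≠ 0 := hP0 ▸ hh 0 (by omega)
    rw [sum_range_one, hP0, (hPm 1 hN).1.eq_X_add_C (hPm 1 hN).2]
    simp only [eval_add, eval_X, eval_C, eval_one]
    field_simp
    ring
  | t + 1, ht, u, v => by
    obtain ⟨a, ha⟩ := exists_three_term_recurrence hPm hPo hh ht
    have hu := congrArg (eval u) ha
    have hv := congrArg (eval v) ha
    simp only [eval_mul, eval_add, eval_X, eval_C] at hu hv
    have ih := christoffel_darboux hPm hPo hh (t := t) (by omega) u v
    set S := ∑ n ∈ range (t + 1), (P n).eval u * (P n).eval v / ipR N π ω (P n) (P n)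
    have hb := div_mul_cancel₀ (ipR N π ω (P (t + 1)) (P (t + 1))) (hh t (by omega))
    rw [sum_range_succ, mul_add, mul_div_assoc', mul_div_right_comm,
      mul_div_cancel_left₀ _ (hh (t + 1) (by omega))]
    linear_combination (-(P (t + 1)).eval v) * hu + (P (t + 1)).eval u * hv +
      ipR N π ω (P (t + 1)) (P (t + 1)) / ipR N π ω (P t) (P t) * ih + (u - v) * S * hb

theorem christoffel_darboux_confluent (hPm : ∀ n ≤ N, (P n).Monic ∧ (P n).natDegree = n)
    (hPo : ∀ a ≤ N, ∀ b ≤ N, a ≠ b → ipR N π ω (P a) (P b) = 0)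
    (hh : ∀ n ≤ N, ipR N π ω (P n) (P n) ≠ 0) {t : ℕ} (ht : t + 1 ≤ N) (v : ℂ) :
    (derivative (P (t + 1))).eval v * (P t).eval v -
        (derivative (P t)).eval v * (P (t + 1)).eval v =
      ipR N π ω (P t) (P t) *
        ∑ n ∈ range (t + 1), (P n).eval v * (P n).eval v / ipR N π ω (P n) (P n) := by
  -- Read the Christoffel–Darboux identity as a polynomial identity in `u` and differentiate at `v`.
  have hpoly : P (t + 1) * C ((P t).eval v) - P t * C ((P (t + 1)).eval v) =
      (X - C v) * (C (ipR N π ω (P t) (P t)) *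
        ∑ n ∈ range (t + 1), C ((P n).eval v / ipR N π ω (P n) (P n)) * P n) := by
    refine Polynomial.funext fun u => ?_
    simp only [eval_sub, eval_mul, eval_C, eval_X, eval_finsetSum,
      christoffel_darboux hPm hPo hh ht u v, mul_sum]
    exact sum_congr rfl fun n _ => by ring
  have := congrArg (fun p => (derivative p).eval v) hpoly
  simp only [derivative_mul (f := X - C v), derivative_X_sub_C, one_mul, eval_add, eval_mul,
    eval_sub, eval_X, eval_C, sub_self, zero_mul, add_zero] at this
  convert this using 1
  · simp
  · simp only [eval_finsetSum, eval_mul, eval_C, div_mul_eq_mul_div]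

theorem CDker_eq_sum (hPm : ∀ n ≤ N, (P n).Monic ∧ (P n).natDegree = n)
    (hPo : ∀ a ≤ N, ∀ b ≤ N, a ≠ b → ipR N π ω (P a) (P b) = 0)
    (hh : ∀ n ≤ N, ipR N π ω (P n) (P n) ≠ 0) {t : ℕ} (ht : t + 1 ≤ N) {x y : ℕ}
    (hx : 0 ≤ ω x) (hxy : x ≠ y → π x ≠ π y) :
    CDker π ω (ipR N π ω (P t) (P t))⁻¹ (P (t + 1)) (P t) x y =
      Real.sqrt (ω x) * Real.sqrt (ω y) *
        ∑ n ∈ range (t + 1),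
          (P n).eval (π x : ℂ) * (P n).eval (π y : ℂ) / ipR N π ω (P n) (P n) := by
  have ht0 := hh t (by omega)
  unfold CDker
  split_ifs with h
  · subst h
    rw [christoffel_darboux_confluent hPm hPo hh ht, ← Complex.ofReal_mul,
      Real.mul_self_sqrt hx]
    field_simp
  · have hπxy : (π x : ℂ) - π y ≠ 0 := sub_ne_zero.2 (by exact_mod_cast hxy h)
    rw [christoffel_darboux hPm hPo hh ht, Real.sqrt_mul hx, Complex.ofReal_mul]
    field_simp

end OrthogonalPolynomials

def partialGram (π ω : ℕ → ℝ) (P : ℕ → ℂ[X]) (r s : ℕ) : Matrix (Fin r) (Fin r) ℂ :=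
  Matrix.of fun n m => ∑ x ∈ range s, (P n).eval (π x : ℂ) * (P m).eval (π x : ℂ) * (ω x : ℂ)

section GramDeterminants

variable {π ω : ℕ → ℝ} {P : ℕ → ℂ[X]}

theorem partialGram_self_eq (r : ℕ) :
    partialGram π ω P r r = (Matrix.of fun x n : Fin r => (P n).eval (π x : ℂ))ᵀ *
      Matrix.diagonal (fun x : Fin r => (ω x : ℂ)) *
        Matrix.of fun x n : Fin r => (P n).eval (π x : ℂ) := by
  ext n m
  rw [partialGram, Matrix.of_apply, Matrix.mul_apply, ← Fin.sum_univ_eq_sum_range]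
  refine sum_congr rfl fun x _ => ?_
  rw [Matrix.mul_diagonal]
  simp only [Matrix.transpose_apply, Matrix.of_apply]
  ring

theorem det_partialGram_self {r : ℕ} (hP : ∀ n < r, (P n).Monic ∧ (P n).natDegree = n) :
    (partialGram π ω P r r).det =
      (Matrix.vandermonde fun x : Fin r => (π x : ℂ)).det ^ 2 * ∏ x ∈ range r, (ω x : ℂ) := by
  rw [partialGram_self_eq, Matrix.det_mul, Matrix.det_mul, Matrix.det_transpose,
    Matrix.det_diagonal, Fin.prod_univ_eq_prod_range (fun x => (ω x : ℂ)),
    Matrix.det_eval_matrixOfPolynomials_eq_det_vandermonde _ (fun n : Fin r => P n)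
      (fun n => (hP n n.2).2) (fun n => (hP n n.2).1)]
  ring

theorem ipR_self_ne_zero {N : ℕ} (hπ : ∀ i ≤ N, ∀ j ≤ N, π i = π j → i = j)
    (hω : ∀ x ≤ N, ω x ≠ 0) (hPm : ∀ n ≤ N, (P n).Monic ∧ (P n).natDegree = n)
    (hPo : ∀ a ≤ N, ∀ b ≤ N, a ≠ b → ipR N π ω (P a) (P b) = 0) {n : ℕ} (hn : n ≤ N) :
    ipR N π ω (P n) (P n) ≠ 0 := by
  have hdiag : partialGram π ω P (N + 1) (N + 1) =
      Matrix.diagonal fun n : Fin (N + 1) => ipR N π ω (P n) (P n) := by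
    ext a b
    rw [Matrix.diagonal_apply]
    split_ifs with hab
    · rw [hab]; rfl
    · exact hPo a (by omega) b (by omega) (Fin.val_ne_of_ne hab)
  have hdet : (partialGram π ω P (N + 1) (N + 1)).det ≠ 0 := by
    rw [det_partialGram_self fun n hn => hPm n (by omega)]
    refine mul_ne_zero (pow_ne_zero _ (Matrix.det_vandermonde_ne_zero_iff.2 fun a b hab => ?_))
      (prod_ne_zero_iff.2 fun x hx => by exact_mod_cast hω x (by have := mem_range.1 hx; omega))
    exact Fin.ext (hπ a (by omega) b (by omega) (Complex.ofReal_inj.1 hab))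
  rw [hdiag, Matrix.det_diagonal] at hdet
  exact prod_ne_zero_iff.1 hdet ⟨n, by omega⟩ (mem_univ _)

theorem det_partialGram_succ {r : ℕ} (hP : ∀ n < r, (P n).degree < r)
    (hπ : Set.InjOn (fun x => (π x : ℂ)) (range r)) (hω : ∀ x < r, ω x ≠ 0) :
    (partialGram π ω P r (r + 1)).det = (partialGram π ω P r r).det *
      (1 + ω r * ∑ x ∈ range r,
        ((Lagrange.basis (range r) (fun y => (π y : ℂ)) x).eval (π r : ℂ)) ^ 2 / ω x) := by
  set E := Matrix.of fun x n : Fin r => (P n).eval (π x : ℂ)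
  set c : Fin r → ℂ := fun x => (Lagrange.basis (range r) (fun y => (π y : ℂ)) x).eval (π r : ℂ)
  -- Lagrange interpolation at the nodes `0, …, r - 1` evaluates each `P_n` at the new node `r`.
  have hEc : Eᵀ *ᵥ c = fun n : Fin r => (P n).eval (π r : ℂ) := by
    funext n
    rw [Lagrange.eval_eq_sum_mul_eval_basis hπ (by rw [card_range]; exact hP n n.2),
      ← Fin.sum_univ_eq_sum_range]
    rfl
  have hG₀ : partialGram π ω P r r =
      Eᵀ * Matrix.diagonal (fun x : Fin r => (ω x : ℂ)) * E := partialGram_self_eq r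
  have hG : partialGram π ω P r (r + 1) =
      Eᵀ * (Matrix.diagonal (fun x : Fin r => (ω x : ℂ)) + Matrix.vecMulVec ((ω r : ℂ) • c) c) *
        E := by
    rw [Matrix.mul_add, Matrix.add_mul, ← hG₀, Matrix.mul_vecMulVec,
      Matrix.vecMulVec_mul, Matrix.mulVec_smul, hEc, ← Matrix.mulVec_transpose, hEc]
    ext n m
    simp only [partialGram, Matrix.of_apply, Matrix.add_apply, Matrix.vecMulVec_apply,
      Pi.smul_apply, smul_eq_mul, sum_range_succ]
    ring
  rw [hG, hG₀, Matrix.det_mul, Matrix.det_mul,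
    Matrix.det_diagonal_add_vecMulVec fun x => by exact_mod_cast hω x x.2, Matrix.det_mul,
    Matrix.det_mul, Matrix.det_diagonal, mul_sum, ← Fin.sum_univ_eq_sum_range (fun x => (ω r : ℂ) *
      (((Lagrange.basis (range r) (fun y => (π y : ℂ)) x).eval (π r : ℂ)) ^ 2 / ω x))]
  have hterm (x : Fin r) : (ω r : ℂ) * c x * c x / ω x = ω r * (c x ^ 2 / ω x) := by ring
  simp only [Pi.smul_apply, smul_eq_mul, hterm]
  ring

end GramDeterminants

section FredholmDeterminant

variable {N : ℕ} {π ω : ℕ → ℝ} {P : ℕ → ℂ[X]}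

theorem Dfred_CDker_eq_det_partialGram (hπ : ∀ i ≤ N, ∀ j ≤ N, π i = π j → i = j)
    (hω : ∀ x ≤ N, 0 ≤ ω x) (hPm : ∀ n ≤ N, (P n).Monic ∧ (P n).natDegree = n)
    (hPo : ∀ a ≤ N, ∀ b ≤ N, a ≠ b → ipR N π ω (P a) (P b) = 0)
    (hh : ∀ n ≤ N, ipR N π ω (P n) (P n) ≠ 0) {t s : ℕ} (ht : t + 1 ≤ N) (hts : t + 1 ≤ s)
    (hs : s ≤ N + 1) :
    Dfred N s (CDker π ω (ipR N π ω (P t) (P t))⁻¹ (P (t + 1)) (P t)) =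
      (∏ n ∈ range (t + 1), ipR N π ω (P n) (P n))⁻¹ * (partialGram π ω P (t + 1) s).det := by
  let A : Matrix (Fin (N + 1 - s)) (Fin (t + 1)) ℂ :=
    Matrix.of fun i n => Real.sqrt (ω (s + i)) * (P n).eval (π (s + i) : ℂ)
  let B : Matrix (Fin (t + 1)) (Fin (N + 1 - s)) ℂ :=
    Matrix.of fun n j => (P n).eval (π (s + j) : ℂ) * Real.sqrt (ω (s + j)) /
      ipR N π ω (P n) (P n)
  have hK : Matrix.of (fun i j : Fin (N + 1 - s) =>
      CDker π ω (ipR N π ω (P t) (P t))⁻¹ (P (t + 1)) (P t) (s + i) (s + j)) = A * B := by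
    ext i j
    rw [Matrix.of_apply, CDker_eq_sum hPm hPo hh ht (hω _ (by omega))
      fun hij hπij => hij (hπ _ (by omega) _ (by omega) hπij), Matrix.mul_apply, mul_sum,
      ← Fin.sum_univ_eq_sum_range]
    exact sum_congr rfl fun n _ => by simp only [A, B, Matrix.of_apply]; ring
  have hBA : 1 - B * A = Matrix.diagonal (fun n : Fin (t + 1) => (ipR N π ω (P n) (P n))⁻¹) *
      partialGram π ω P (t + 1) s := by
    ext n m
    have hsplit := sum_range_add
      (fun x => (P n).eval (π x : ℂ) * (P m).eval (π x : ℂ) * (ω x : ℂ)) s (N + 1 - s)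
    rw [Nat.add_sub_cancel' hs] at hsplit
    have hnm : ipR N π ω (P n) (P m) = partialGram π ω P (t + 1) s n m +
        ∑ j ∈ range (N + 1 - s),
          (P n).eval (π (s + j) : ℂ) * (P m).eval (π (s + j) : ℂ) * (ω (s + j) : ℂ) := hsplit
    have hBA_nm : (B * A) n m = (∑ j ∈ range (N + 1 - s),
        (P n).eval (π (s + j) : ℂ) * (P m).eval (π (s + j) : ℂ) * (ω (s + j) : ℂ)) /
          ipR N π ω (P n) (P n) := by
      rw [Matrix.mul_apply, sum_div, ← Fin.sum_univ_eq_sum_range]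
      refine sum_congr rfl fun j _ => ?_
      have hsq : (Real.sqrt (ω (s + j)) : ℂ) * Real.sqrt (ω (s + j)) = ω (s + j) := by
        rw [← Complex.ofReal_mul, Real.mul_self_sqrt (hω _ (by omega))]
      simp only [A, B, Matrix.of_apply]
      linear_combination (P n).eval (π (s + j) : ℂ) * (P m).eval (π (s + j) : ℂ) /
        ipR N π ω (P n) (P n) * hsq
    rw [Matrix.sub_apply, hBA_nm, Matrix.diagonal_mul, Matrix.one_apply]
    split_ifs with h
    · subst h
      have hn := hh n (by omega)
      linear_combination (ipR N π ω (P n) (P n))⁻¹ * hnm - inv_mul_cancel₀ hn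
    · rw [hPo n (by omega) m (by omega) (Fin.val_ne_of_ne h)] at hnm
      linear_combination (ipR N π ω (P n) (P n))⁻¹ * hnm
  unfold Dfred
  rw [hK, Matrix.det_one_sub_mul_comm, hBA, Matrix.det_mul, Matrix.det_diagonal,
    Fin.prod_univ_eq_prod_range (fun n => (ipR N π ω (P n) (P n))⁻¹), prod_inv_distrib]

end FredholmDeterminant

/-- the initial values `D_k` and `D_{k+1}` of the Fredholm determinants. -/
theorem stmt14 (N k : ℕ) (hk1 : 1 ≤ k) (hkN : k ≤ N)
    (π ω : ℕ → ℝ)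
    (hπ : ∀ i ≤ N, ∀ j ≤ N, π i = π j → i = j)
    (hω : ∀ x ≤ N, 0 < ω x)
    (P : ℕ → Polynomial ℂ)
    (hPm : ∀ n ≤ N, (P n).Monic ∧ (P n).natDegree = n)
    (hPo : ∀ a ≤ N, ∀ b ≤ N, a ≠ b → ipR N π ω (P a) (P b) = 0)
    (c : ℂ) (hc : c = (ipR N π ω (P (k - 1)) (P (k - 1)))⁻¹)
    (Z qk : ℂ)
    (hZ : Z = ∏ i ∈ Finset.range k, ipR N π ω (P i) (P i))
    (hqk : qk = (∑ m ∈ Finset.range (k + 1), ((ω m : ℂ)⁻¹ *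
        ∏ j ∈ (Finset.range (k + 1)).erase m, (((π m : ℂ) - (π j : ℂ)) ^ 2)⁻¹))⁻¹) :
    Dfred N k (CDker π ω c (P k) (P (k - 1))) =
        Z⁻¹ * (∏ j ∈ Finset.range k, ∏ i ∈ Finset.range j, ((π i : ℂ) - (π j : ℂ)) ^ 2) *
          ∏ l ∈ Finset.range k, (ω l : ℂ) ∧
    Dfred N (k + 1) (CDker π ω c (P k) (P (k - 1))) =
        (ω k : ℂ) * qk⁻¹ * Dfred N k (CDker π ω c (P k) (P (k - 1))) *
          ∏ l ∈ Finset.range k, ((π k : ℂ) - (π l : ℂ)) ^ 2 := by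
  obtain ⟨t, rfl⟩ : ∃ t, k = t + 1 := ⟨k - 1, by omega⟩
  simp only [Nat.add_sub_cancel] at hc ⊢
  subst hc hZ hqk
  have hh : ∀ n ≤ N, ipR N π ω (P n) (P n) ≠ 0 := fun n hn =>
    ipR_self_ne_zero hπ (fun x hx => (hω x hx).ne') hPm hPo hn
  have hD {s : ℕ} (hts : t + 1 ≤ s) (hs : s ≤ N + 1) :=
    Dfred_CDker_eq_det_partialGram hπ (fun x hx => (hω x hx).le) hPm hPo hh hkN hts hs
  refine ⟨?_, ?_⟩
  · rw [hD le_rfl (by omega), det_partialGram_self fun n hn => hPm n (by omega),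
      det_vandermonde_sq (t + 1) fun x => (π x : ℂ)]
    ring
  · have hdeg (n : ℕ) (hn : n < t + 1) : (P n).degree < ↑(t + 1) := by
      rw [degree_eq_natDegree (hPm n (by omega)).1.ne_zero, (hPm n (by omega)).2]
      exact_mod_cast hn
    have hπinj : Set.InjOn (fun x => (π x : ℂ)) (range (t + 1)) := fun a ha b hb hab =>
      hπ a (by have := mem_range.1 ha; omega) b (by have := mem_range.1 hb; omega)
        (Complex.ofReal_inj.1 hab)
    rw [hD (by omega) (by omega), hD le_rfl (by omega),
      det_partialGram_succ hdeg hπinj fun x hx => (hω x (by omega)).ne',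
      one_add_mul_sum_eval_basis_sq (v := fun x => (π x : ℂ)) (w := fun x => (ω x : ℂ))
        (fun x hx h => absurd (hπ x (by omega) (t + 1) hkN (Complex.ofReal_inj.1 h)) (by omega))
        (by exact_mod_cast (hω (t + 1) hkN).ne'), inv_inv]
    ring
end
end

section
/- Let Λ, C, C′, A, A′ ∈ Mat(2,ℂ), let π ∈ ℂ and η ∈ ℂ with η ≠ 0, and assume A′² = 0. Then the identity (I + η^{−1}(ζ−π)^{−1}A)·(ζΛ + C) = (ζΛ + C′)·(I + (ζ−π)^{−1}A′) holds for every ζ ∈ ℂ with ζ ≠ π if and only if the following two equations hold: (πΛ + C + η^{−1}AΛ)·A′ = η^{−1}·A·(πΛ + C) and C′ = C + η^{−1}AΛ − ΛA′. -/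
open Matrix

noncomputable section

lemma key (Λ C C' A A' : Mat2) (x₀ η ζ : ℂ) (hη : η ≠ 0) (hζ : ζ ≠ x₀) :
    (1 + (η⁻¹ * (ζ - x₀)⁻¹) • A) * (ζ • Λ + C) - (ζ • Λ + C') * (1 + (ζ - x₀)⁻¹ • A') =
    (C + η⁻¹ • (A * Λ) - (C' + Λ * A')) +
      (ζ - x₀)⁻¹ • (η⁻¹ • (A * (x₀ • Λ + C)) - (x₀ • Λ + C') * A') := by
  have hu : ζ - x₀ ≠ 0 := sub_ne_zero.mpr hζ
  ext i j
  simp only [Matrix.mul_apply, Fin.sum_univ_two, Matrix.one_apply, Matrix.add_apply,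
    Matrix.sub_apply, Matrix.smul_apply, smul_eq_mul]
  fin_cases i <;> fin_cases j <;>
    · norm_num
      field_simp
      ring


/-- the compatibility condition for a linear Lax pair is equivalent to the
pair of matrix equations obtained from the residue at `π` and the asymptotics at infinity. -/
theorem stmt15 (Λ C C' A A' : Mat2) (x₀ η : ℂ) (hη : η ≠ 0) (hA' : A' * A' = 0) :
    (∀ ζ : ℂ, ζ ≠ x₀ →
      (1 + (η⁻¹ * (ζ - x₀)⁻¹) • A) * (ζ • Λ + C) =
        (ζ • Λ + C') * (1 + (ζ - x₀)⁻¹ • A')) ↔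
    ((x₀ • Λ + C + η⁻¹ • (A * Λ)) * A' = η⁻¹ • (A * (x₀ • Λ + C)) ∧
      C' = C + η⁻¹ • (A * Λ) - Λ * A') := by
  set M : Mat2 := C + η⁻¹ • (A * Λ) - (C' + Λ * A') with hM
  set N : Mat2 := η⁻¹ • (A * (x₀ • Λ + C)) - (x₀ • Λ + C') * A' with hN
  constructor
  · intro h
    have e1 : M + N = 0 := by
      have h1 := key Λ C C' A A' x₀ η (x₀ + 1) hη (by intro hc; simpa using hc)
      rw [sub_eq_zero.mpr (h (x₀ + 1) (by intro hc; simpa using hc))] at h1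
      simpa using h1.symm
    have e2 : M + (2 : ℂ)⁻¹ • N = 0 := by
      have h1 := key Λ C C' A A' x₀ η (x₀ + 2) hη (by intro hc; simpa using hc)
      rw [sub_eq_zero.mpr (h (x₀ + 2) (by intro hc; simpa using hc))] at h1
      simpa using h1.symm
    have hNz : N = 0 := by
      have : (2 : ℂ)⁻¹ • N = N + ((2 : ℂ)⁻¹ • N - N) := by abel
      have hsub : N - (2 : ℂ)⁻¹ • N = 0 := by
        have := sub_eq_zero.mpr (e1.trans e2.symm)
        simpa [add_sub_add_left_eq_sub] using this
      have h2 : ((1 : ℂ) - (2 : ℂ)⁻¹) • N = 0 := by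
        rw [sub_smul, one_smul]; exact hsub
      have hc : ((1 : ℂ) - (2 : ℂ)⁻¹) ≠ 0 := by norm_num
      exact (smul_eq_zero.mp h2).resolve_left hc
    have hMz : M = 0 := by simpa [hNz] using e1
    have hC' : C' = C + η⁻¹ • (A * Λ) - Λ * A' := by
      have h2 : C + η⁻¹ • (A * Λ) = C' + Λ * A' := sub_eq_zero.mp hMz
      rw [h2]; abel
    refine ⟨?_, hC'⟩
    have hNe : (x₀ • Λ + C') * A' = η⁻¹ • (A * (x₀ • Λ + C)) :=
      (sub_eq_zero.mp hNz).symm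
    rw [← hNe, hC']
    noncomm_ring
    simp [mul_assoc, hA']
  · rintro ⟨e1, e2⟩
    intro ζ hζ
    have hMz : M = 0 := by rw [hM, e2]; abel
    have hNz : N = 0 := by
      rw [hN]
      have : (x₀ • Λ + C') * A' = η⁻¹ • (A * (x₀ • Λ + C)) := by
        rw [e2, ← e1]
        noncomm_ring
        simp [mul_assoc, hA']
      rw [this]; abel
    have hk := key Λ C C' A A' x₀ η ζ hη hζ
    rw [← hM, ← hN, hMz, hNz] at hk
    simp at hk
    exact sub_eq_zero.mp hk
end
end

section
/- Let κ_1, κ_2 ∈ ℂ and Λ = diag(κ_1, κ_2); let A = [[p, q],[r, −p]] and A′ = [[p′, q′],[r′, −p′]] with p² = −qr and p′² = −q′r′; let C = [[α, β],[γ, δ]] and C′ = [[α′, β′],[γ′, δ′]]; let π ∈ ℂ and η ∈ ℂ with η ≠ 0. Assume the compatibility system: (πΛ + C + η^{−1}AΛ)·A′ = η^{−1}·A·(πΛ + C) and C′ = C + η^{−1}AΛ − ΛA′. Set ε = det(πΛ + C + η^{−1}AΛ). Then ε = det(πΛ + C) + η^{−1}κ_1(pδ − rβ) − η^{−1}κ_2(pα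 + qγ). If moreover ε ≠ 0 and p, q, r are all nonzero, then: p′ = −η^{−1}p^{−1}ε^{−1}(pβ + qδ + κ_2πq)(rα − pγ + κ_1πr); q′ = η^{−1}q^{−1}ε^{−1}(pβ + qδ + κ_2πq)²; r′ = η^{−1}r^{−1}ε^{−1}(rα − pγ + κ_1πr)²; α′ = α + η^{−1}κ_1 p − κ_1 p′; β′ = β + η^{−1}κ_2 q − κ_1 q′; γ′ = γ + η^{−1}κ_1 r − κ_2 r′; δ′ = δ − η^{−1}κ_2 p + κ_2 p′. -/
open Matrix

noncomputable section

/-- solution of the compatibility condition in the general linear case. -/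
theorem stmt16 (κ₁ κ₂ p q r p' q' r' α β γ δ α' β' γ' δ' x₀ η ε : ℂ)
    (hη : η ≠ 0)
    (hp : p ^ 2 = -(q * r)) (hp' : p' ^ 2 = -(q' * r'))
    (hcomp1 : (x₀ • (Matrix.diagonal ![κ₁, κ₂] : Mat2) + !![α, β; γ, δ] +
        η⁻¹ • (!![p, q; r, -p] * Matrix.diagonal ![κ₁, κ₂])) * !![p', q'; r', -p'] =
      η⁻¹ • (!![p, q; r, -p] *
        (x₀ • (Matrix.diagonal ![κ₁, κ₂] : Mat2) + !![α, β; γ, δ])))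
    (hcomp2 : !![α', β'; γ', δ'] = !![α, β; γ, δ] +
        η⁻¹ • (!![p, q; r, -p] * Matrix.diagonal ![κ₁, κ₂]) -
        (Matrix.diagonal ![κ₁, κ₂] : Mat2) * !![p', q'; r', -p'])
    (hε : ε = Matrix.det (x₀ • (Matrix.diagonal ![κ₁, κ₂] : Mat2) + !![α, β; γ, δ] +
        η⁻¹ • (!![p, q; r, -p] * Matrix.diagonal ![κ₁, κ₂]))) :
    ε = Matrix.det (x₀ • (Matrix.diagonal ![κ₁, κ₂] : Mat2) + !![α, β; γ, δ]) +
        η⁻¹ * κ₁ * (p * δ - r * β) - η⁻¹ * κ₂ * (p * α + q * γ) ∧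
    (ε ≠ 0 → p ≠ 0 → q ≠ 0 → r ≠ 0 →
      (p' = -η⁻¹ * p⁻¹ * ε⁻¹ * (p * β + q * δ + κ₂ * x₀ * q) *
          (r * α - p * γ + κ₁ * x₀ * r) ∧
        q' = η⁻¹ * q⁻¹ * ε⁻¹ * (p * β + q * δ + κ₂ * x₀ * q) ^ 2 ∧
        r' = η⁻¹ * r⁻¹ * ε⁻¹ * (r * α - p * γ + κ₁ * x₀ * r) ^ 2 ∧
        α' = α + η⁻¹ * κ₁ * p - κ₁ * p' ∧
        β' = β + η⁻¹ * κ₂ * q - κ₁ * q' ∧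
        γ' = γ + η⁻¹ * κ₁ * r - κ₂ * r' ∧
        δ' = δ - η⁻¹ * κ₂ * p + κ₂ * p')) := by
  have hd : (Matrix.diagonal ![κ₁, κ₂] : Mat2) = !![κ₁, 0; 0, κ₂] := by
    ext i j; fin_cases i <;> fin_cases j <;> simp [Matrix.diagonal]
  rw [hd] at hcomp1 hcomp2 hε ⊢
  have hinv : η⁻¹ * η = 1 := inv_mul_cancel₀ hη
  have h00 := congr_fun (congr_fun hcomp1 0) 0
  have h01 := congr_fun (congr_fun hcomp1 0) 1
  have h10 := congr_fun (congr_fun hcomp1 1) 0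
  have h11 := congr_fun (congr_fun hcomp1 1) 1
  have g00 := congr_fun (congr_fun hcomp2 0) 0
  have g01 := congr_fun (congr_fun hcomp2 0) 1
  have g10 := congr_fun (congr_fun hcomp2 1) 0
  have g11 := congr_fun (congr_fun hcomp2 1) 1
  simp [Matrix.mul_apply, Fin.sum_univ_two] at h00 h01 h10 h11 g00 g01 g10 g11
  rw [Matrix.det_fin_two] at hε
  rw [Matrix.det_fin_two]
  simp [Matrix.mul_apply, Fin.sum_univ_two] at hε ⊢
  constructor
  · linear_combination hε - (η⁻¹)^2 * κ₁ * κ₂ * hp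
  · intro hε0 hp0 hq0 hr0
    -- abbreviations (as terms)
    have key_p : η * (ε * (p * p')) =
        -((p * β + q * δ + κ₂ * x₀ * q) * (r * α - p * γ + κ₁ * x₀ * r)) := by
      linear_combination (η * p * p') * hε
        + (η * p * (x₀ * κ₂ + δ - η⁻¹ * p * κ₂)) * h00
        - (η * p * (β + η⁻¹ * q * κ₂)) * h10
        + (p * ((x₀ * κ₂ + δ - η⁻¹ * p * κ₂) * (p * (x₀ * κ₁ + α) + q * γ)
            - (β + η⁻¹ * q * κ₂) * (r * (x₀ * κ₁ + α) - p * γ))) * hinv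
        + ((x₀ * κ₁ + α) * (x₀ * κ₂ + δ - η⁻¹ * p * κ₂)) * hp
    have key_q : η * (ε * (q * q')) = (p * β + q * δ + κ₂ * x₀ * q) ^ 2 := by
      linear_combination (η * q * q') * hε
        + (η * q * (x₀ * κ₂ + δ - η⁻¹ * p * κ₂)) * h01
        - (η * q * (β + η⁻¹ * q * κ₂)) * h11
        + (q * ((x₀ * κ₂ + δ - η⁻¹ * p * κ₂) * (p * β + q * (x₀ * κ₂ + δ))
            - (β + η⁻¹ * q * κ₂) * (r * β - p * (x₀ * κ₂ + δ)))) * hinv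
        - (β * (β + η⁻¹ * q * κ₂)) * hp
    have key_r : η * (ε * (r * r')) = (r * α - p * γ + κ₁ * x₀ * r) ^ 2 := by
      linear_combination (η * r * r') * hε
        + (η * r * (x₀ * κ₁ + α + η⁻¹ * p * κ₁)) * h10
        - (η * r * (γ + η⁻¹ * r * κ₁)) * h00
        + (r * ((x₀ * κ₁ + α + η⁻¹ * p * κ₁) * (r * (x₀ * κ₁ + α) - p * γ)
            - (γ + η⁻¹ * r * κ₁) * (p * (x₀ * κ₁ + α) + q * γ))) * hinv
        - (γ * (γ + η⁻¹ * r * κ₁)) * hp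
    refine ⟨?_, ?_, ?_, by linear_combination g00, by linear_combination g01,
      by linear_combination g10, by linear_combination g11⟩
    · field_simp
      linear_combination key_p
    · field_simp
      linear_combination key_q
    · field_simp
      linear_combination key_r
end
end

section
/- (Reduction to the difference Painlevé V equation.) Let k ≥ 1 be an integer, s a nonnegative integer, and ξ, τ, b, b′, α, α′, β, β′ ∈ ℂ with ξ ≠ 0. Set Λ = diag(1, ξ), A = (k+b)·[[−1, −αβ],[1/(αβ), 1]], C = [[b, bβ],[(τ−ξb)/β, τ−ξb]], A′ = (k+b′)·[[−1, −α′β′],[1/(α′β′), 1]], C′ = [[b′, b′β′],[(τ−ξb′)/β′, τ−ξb′]]. Assume that for every ζ ∈ ℂ with ζ ≠ s+1: (I + (ζ−(s+1))^{−1}A)·(Λζ + C) = (Λζ + C′)·(I + (ζ−(s+1))^{−1}A′). Define f = −k − b + s/(1−α), f′ = −k − b′ + (s+1)/(1−α′), g = −α, g′ = −α′. Assume the genericity conditions: α, α′, β, β′ are nonzero; k+b ≠ 0 and k+b′ ≠ 0; b ≠ b′; α ≠ 1, α′ ≠ 1 and ξα ≠ 1; f′ ≠ 0, f′ + k + τ/ξ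 ≠ 0, f′ − 1 − s + k ≠ 0, and (1+ξg)f′ + k − s − 1 ≠ 0. Then: (i) f′ + f = −(k + τ/ξ) + s/(1+g) + (τ/ξ + s + 1)/(1 + ξg); (ii) g′·g = (f′−1−s)(f′−1−s+k) / (ξ·f′·(f′ + k + τ/ξ)); (iii) β′/β = −(ξg/g′)·((1+g′)f′ + (k+τ/ξ)g′ − s − 1)/((1+ξg)f′ + k − s − 1). -/
open Matrix

noncomputable section

/-!
Multiplying the compatibility condition by `ε = ζ - (s+1)` and comparing the constant terms in `ε`
gives the residue identity `A (Λ(s+1) + C) = (Λ(s+1) + C') A'`. With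
`P = s+1+b+α(τ-ξb)` and `Q = b+α(ξ(s+1)+τ-ξb)`, its diagonal entries are two relations between
`(b, α)` and `(f', α')`. Eliminating `α'` leaves a quadratic in `f'` which factors as
`((1-ξα)f' - P) · F`, and `F` vanishes only on the spurious branch `b' = b`. Hence `(1-ξα)f' = P`,
which is (i); substituting it back gives (ii), and the `(0,1)` entry gives
`β(f' - s - 1) = α'β'f'`, from which (iii) follows.
-/

section Residue

variable {K R : Type*} [Field K] [Ring R] [Algebra K R]

theorem one_add_inv_smul_mul_add_smul {c ε : K} (hε : ε ≠ 0) (a l e : R) :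
    (1 + ε⁻¹ • a) * ((c + ε) • l + e) =
      ε • l + (c • l + e + a * l + ε⁻¹ • (a * (c • l + e))) := by
  simp only [add_mul, mul_add, one_mul, add_smul, smul_mul_assoc, mul_smul_comm, smul_add,
    smul_smul]
  match_scalars <;> field_simp <;> ring

theorem add_smul_mul_one_add_inv_smul {c ε : K} (hε : ε ≠ 0) (a l e : R) :
    ((c + ε) • l + e) * (1 + ε⁻¹ • a) =
      ε • l + (c • l + e + l * a + ε⁻¹ • ((c • l + e) * a)) := by
  simp only [add_mul, mul_add, mul_one, add_smul, smul_mul_assoc, mul_smul_comm, smul_add,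
    smul_smul]
  match_scalars <;> field_simp <;> ring

theorem residue_eq_of_forall_ne (h2 : (2 : K) ≠ 0) {c : K} {a a' l e e' : R}
    (h : ∀ ζ : K, ζ ≠ c →
      (1 + (ζ - c)⁻¹ • a) * (ζ • l + e) = (ζ • l + e') * (1 + (ζ - c)⁻¹ • a')) :
    a * (c • l + e) = (c • l + e') * a' := by
  have hε : ∀ ε : K, ε ≠ 0 → c • l + e + a * l + ε⁻¹ • (a * (c • l + e)) =
      c • l + e' + l * a' + ε⁻¹ • ((c • l + e') * a') := by
    intro ε hε
    have := h (c + ε) (by simpa using hε)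
    rw [add_sub_cancel_left, one_add_inv_smul_mul_add_smul hε,
      add_smul_mul_one_add_inv_smul hε] at this
    exact add_left_cancel this
  have h1 := hε 1 one_ne_zero
  have h2 := hε 2⁻¹ (inv_ne_zero h2)
  rw [inv_inv] at h2
  linear_combination (norm := module) h2 - h1

end Residue

theorem residue_entries {k S ξ τ b b' α α' β β' : ℂ} (hα : α ≠ 0) (hβ : β ≠ 0)
    (hα' : α' ≠ 0) (hβ' : β' ≠ 0)
    (h : ((k + b) • !![-1, -(α * β); (α * β)⁻¹, 1] : Mat2) *
        (S • diagonal ![1, ξ] + !![b, b * β; (τ - ξ * b) / β, τ - ξ * b]) =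
      (S • diagonal ![1, ξ] + !![b', b' * β'; (τ - ξ * b') / β', τ - ξ * b']) *
        ((k + b') • !![-1, -(α' * β'); (α' * β')⁻¹, 1])) :
    (k + b) * (S + b + α * (τ - ξ * b)) * α' = (k + b') * (α' * (S + b') - b') ∧
    (k + b) * (b + α * (ξ * S + τ - ξ * b)) =
      α * (k + b') * (ξ * S + (1 - α') * (τ - ξ * b')) ∧
    (k + b) * β * (b + α * (ξ * S + τ - ξ * b)) = (k + b') * β' * (α' * (S + b') - b') := by
  have h00 := congrFun (congrFun h 0) 0
  have h01 := congrFun (congrFun h 0) 1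
  have h11 := congrFun (congrFun h 1) 1
  simp only [Nat.succ_eq_add_one, Nat.reduceAdd, _root_.mul_inv_rev, smul_of, smul_cons,
    smul_eq_mul, mul_neg, mul_one, neg_add_rev, smul_empty, Fin.isValue, Matrix.mul_apply,
    of_apply, cons_val', cons_val_fin_one, cons_val_zero, Matrix.add_apply, Matrix.smul_apply,
    Fin.sum_univ_two, diagonal_apply_eq, cons_val_one, ne_eq, one_ne_zero, not_false_eq_true,
    diagonal_apply_ne, mul_zero, zero_add, neg_mul, zero_ne_one] at h00 h01 h11
  field_simp at h00 h01 h11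
  exact ⟨by linear_combination -h00, by linear_combination h11, by linear_combination -h01⟩

section Elimination

variable {ξ τ k S b b' α α' β β' f' : ℂ}

theorem residue_diag_in_f' (hN : (f' + k + b') * (1 - α') = S)
    (h00 : (k + b) * (S + b + α * (τ - ξ * b)) * α' = (k + b') * (α' * (S + b') - b'))
    (h11 : (k + b) * (b + α * (ξ * S + τ - ξ * b)) =
      α * (k + b') * (ξ * S + (1 - α') * (τ - ξ * b'))) :
    (k + b) * (S + b + α * (τ - ξ * b)) * α' = (k + b') * (1 - α') * (f' - S + k) ∧
    (k + b) * (b + α * (ξ * S + τ - ξ * b)) =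
      α * (k + b') * (1 - α') * (ξ * f' + ξ * k + τ) :=
  ⟨by linear_combination h00 - (k + b') * hN, by linear_combination h11 - α * (k + b') * ξ * hN⟩

theorem residue_diag_relation (hκ : k + b ≠ 0)
    (hA : (k + b) * (S + b + α * (τ - ξ * b)) * α' = (k + b') * (1 - α') * (f' - S + k))
    (hB : (k + b) * (b + α * (ξ * S + τ - ξ * b)) =
      α * (k + b') * (1 - α') * (ξ * f' + ξ * k + τ)) :
    α * α' * (S + b + α * (τ - ξ * b)) * (ξ * f' + ξ * k + τ) =
      (b + α * (ξ * S + τ - ξ * b)) * (f' - S + k) := by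
  refine mul_left_cancel₀ hκ ?_
  linear_combination α * (ξ * f' + ξ * k + τ) * hA - (f' - S + k) * hB

theorem residue_f'_eq (hκ : k + b ≠ 0) (hα : α ≠ 0) (hS : S ≠ 0) (hξα : ξ * α ≠ 1)
    (hα' : α' ≠ 1) (hbb' : b ≠ b')
    (hT : ξ * f' + ξ * k + τ ≠ 0) (hU : f' - S + k ≠ 0)
    (hN : (f' + k + b') * (1 - α') = S)
    (hA : (k + b) * (S + b + α * (τ - ξ * b)) * α' = (k + b') * (1 - α') * (f' - S + k))
    (hB : (k + b) * (b + α * (ξ * S + τ - ξ * b)) =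
      α * (k + b') * (1 - α') * (ξ * f' + ξ * k + τ)) :
    (1 - ξ * α) * f' = S + b + α * (τ - ξ * b) := by
  have hC := residue_diag_relation hκ hA hB
  set P := S + b + α * (τ - ξ * b)
  set T := ξ * f' + ξ * k + τ
  set D := (1 - ξ * α) * f' - P
  have hξα' : 1 - ξ * α ≠ 0 := sub_ne_zero.mpr hξα.symm
  have hP : P ≠ 0 := by
    intro hP
    have hQ : b + α * (ξ * S + τ - ξ * b) = -S * (1 - ξ * α) := by linear_combination hP
    rw [hP, hQ, mul_zero, zero_mul, eq_comm] at hC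
    exact mul_ne_zero (mul_ne_zero (neg_ne_zero.mpr hS) hξα') hU hC
  -- With `F = (b(1-ξα) + ατ) f' + (k+b) Q - αS(ξk+τ)`, the relations give `D * F = 0` and
  -- `P α T (1-α') (b-b') = -(k+b)(1-ξα) F`.
  have key : D * (P * α * T * ((1 - α') * (b - b'))) = 0 := by
    linear_combination ((k + b) * (1 - ξ * α) * P + D * P) * hB
      + ((k + b) * (1 - ξ * α) * f' - D * (k + b)) * hC + (k + b) * (1 - ξ * α) * P * α * T * hN
  have hD : D = 0 := by
    simpa [hP, hα, hT, sub_eq_zero, hα'.symm, hbb'] using key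
  exact sub_eq_zero.mp hD

theorem residue_g'_mul_g (hξα : ξ * α ≠ 1)
    (hf' : (1 - ξ * α) * f' = S + b + α * (τ - ξ * b))
    (hC : α * α' * (S + b + α * (τ - ξ * b)) * (ξ * f' + ξ * k + τ) =
      (b + α * (ξ * S + τ - ξ * b)) * (f' - S + k)) :
    α * α' * f' * (ξ * f' + ξ * k + τ) = (f' - S) * (f' - S + k) := by
  refine mul_left_cancel₀ (sub_ne_zero.mpr hξα.symm) ?_
  linear_combination hC + (α * α' * (ξ * f' + ξ * k + τ) - (f' - S + k)) * hf'

theorem residue_beta_relation (hκ : k + b ≠ 0) (hξα : ξ * α ≠ 1)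
    (hf' : (1 - ξ * α) * f' = S + b + α * (τ - ξ * b))
    (h00 : (k + b) * (S + b + α * (τ - ξ * b)) * α' = (k + b') * (α' * (S + b') - b'))
    (h01 : (k + b) * β * (b + α * (ξ * S + τ - ξ * b)) =
      (k + b') * β' * (α' * (S + b') - b')) :
    β * (f' - S) = α' * β' * f' := by
  refine mul_left_cancel₀ (mul_ne_zero hκ (sub_ne_zero.mpr hξα.symm)) ?_
  linear_combination h01 - β' * h00 + (k + b) * (β - α' * β') * hf'

end Elimination

theorem stmt17_general (k : ℕ) (s : ℕ)
    (ξ τ b b' α α' β β' : ℂ) (hξ : ξ ≠ 0)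
    (hcomp : ∀ ζ : ℂ, ζ ≠ (s : ℂ) + 1 →
      (1 + (ζ - ((s : ℂ) + 1))⁻¹ •
          (((k : ℂ) + b) • (!![-1, -(α * β); (α * β)⁻¹, 1] : Mat2))) *
        (ζ • (Matrix.diagonal ![1, ξ] : Mat2) +
          !![b, b * β; (τ - ξ * b) / β, τ - ξ * b]) =
      (ζ • (Matrix.diagonal ![1, ξ] : Mat2) +
          !![b', b' * β'; (τ - ξ * b') / β', τ - ξ * b']) *
        (1 + (ζ - ((s : ℂ) + 1))⁻¹ •
          (((k : ℂ) + b') • (!![-1, -(α' * β'); (α' * β')⁻¹, 1] : Mat2))))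
    (f f' g g' : ℂ)
    (hf : f = -(k : ℂ) - b + (s : ℂ) / (1 - α))
    (hf' : f' = -(k : ℂ) - b' + ((s : ℂ) + 1) / (1 - α'))
    (hg : g = -α) (hg' : g' = -α')
    (hα : α ≠ 0) (hα' : α' ≠ 0) (hβ : β ≠ 0) (hβ' : β' ≠ 0)
    (hkb : (k : ℂ) + b ≠ 0)
    (hbb' : b ≠ b')
    (hα'1 : α' ≠ 1) (hξα : ξ * α ≠ 1)
    (hf'0 : f' ≠ 0) (hf'1 : f' + (k : ℂ) + τ / ξ ≠ 0)
    (hf'2 : f' - 1 - (s : ℂ) + (k : ℂ) ≠ 0)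
    (hf'3 : (1 + ξ * g) * f' + (k : ℂ) - (s : ℂ) - 1 ≠ 0) :
    f' + f = -((k : ℂ) + τ / ξ) + (s : ℂ) / (1 + g) + (τ / ξ + (s : ℂ) + 1) / (1 + ξ * g) ∧
    g' * g = (f' - 1 - (s : ℂ)) * (f' - 1 - (s : ℂ) + (k : ℂ)) /
      (ξ * f' * (f' + (k : ℂ) + τ / ξ)) ∧
    β' / β = -(ξ * g / g') *
      (((1 + g') * f' + ((k : ℂ) + τ / ξ) * g' - (s : ℂ) - 1) /
        ((1 + ξ * g) * f' + (k : ℂ) - (s : ℂ) - 1)) := by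
  obtain ⟨h00, h11, h01⟩ := residue_entries hα hβ hα' hβ'
    (residue_eq_of_forall_ne two_ne_zero hcomp)
  have hN : (f' + k + b') * (1 - α') = (s : ℂ) + 1 := by
    rw [hf']
    field_simp [sub_ne_zero.mpr hα'1.symm]
    ring
  obtain ⟨hA, hB⟩ := residue_diag_in_f' hN h00 h11
  have hT : ξ * f' + ξ * k + τ ≠ 0 := by
    convert mul_ne_zero hξ hf'1 using 1
    field_simp
  have hf'eq := residue_f'_eq hkb hα (Nat.cast_add_one_ne_zero s) hξα hα'1 hbb' hT
    (by convert hf'2 using 1; ring) hN hA hB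
  have hgg := residue_g'_mul_g hξα hf'eq (residue_diag_relation hkb hA hB)
  have hββ := residue_beta_relation hkb hξα hf'eq h00 h01
  subst hf hg hg'
  refine ⟨?_, ?_, ?_⟩
  · have : f' = b - τ / ξ + (τ / ξ + s + 1) / (1 - ξ * α) := by
      field_simp [sub_ne_zero.mpr hξα.symm]
      linear_combination ξ * hf'eq
    rw [this]
    ring
  · rw [eq_div_iff (mul_ne_zero (mul_ne_zero hξ hf'0) hf'1)]
    field_simp
    linear_combination hgg
  · set Y := (1 + ξ * -α) * f' + (k : ℂ) - (s : ℂ) - 1 with hY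
    rw [div_eq_iff hβ]
    field_simp
    refine mul_left_cancel₀ hf'0 ?_
    linear_combination -Y * hββ - β * hgg + β * (f' - (s + 1)) * hY

/-- reduction of the compatibility condition to the difference Painlevé V
equation (the case `ξ ≠ 0`). -/
theorem stmt17 (k : ℕ) (hk : 1 ≤ k) (s : ℕ)
    (ξ τ b b' α α' β β' : ℂ) (hξ : ξ ≠ 0)
    (hcomp : ∀ ζ : ℂ, ζ ≠ (s : ℂ) + 1 →
      (1 + (ζ - ((s : ℂ) + 1))⁻¹ •
          (((k : ℂ) + b) • (!![-1, -(α * β); (α * β)⁻¹, 1] : Mat2))) *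
        (ζ • (Matrix.diagonal ![1, ξ] : Mat2) +
          !![b, b * β; (τ - ξ * b) / β, τ - ξ * b]) =
      (ζ • (Matrix.diagonal ![1, ξ] : Mat2) +
          !![b', b' * β'; (τ - ξ * b') / β', τ - ξ * b']) *
        (1 + (ζ - ((s : ℂ) + 1))⁻¹ •
          (((k : ℂ) + b') • (!![-1, -(α' * β'); (α' * β')⁻¹, 1] : Mat2))))
    (f f' g g' : ℂ)
    (hf : f = -(k : ℂ) - b + (s : ℂ) / (1 - α))
    (hf' : f' = -(k : ℂ) - b' + ((s : ℂ) + 1) / (1 - α'))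
    (hg : g = -α) (hg' : g' = -α')
    (hα : α ≠ 0) (hα' : α' ≠ 0) (hβ : β ≠ 0) (hβ' : β' ≠ 0)
    (hkb : (k : ℂ) + b ≠ 0) (hkb' : (k : ℂ) + b' ≠ 0)
    (hbb' : b ≠ b')
    (hα1 : α ≠ 1) (hα'1 : α' ≠ 1) (hξα : ξ * α ≠ 1)
    (hf'0 : f' ≠ 0) (hf'1 : f' + (k : ℂ) + τ / ξ ≠ 0)
    (hf'2 : f' - 1 - (s : ℂ) + (k : ℂ) ≠ 0)
    (hf'3 : (1 + ξ * g) * f' + (k : ℂ) - (s : ℂ) - 1 ≠ 0) :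
    f' + f = -((k : ℂ) + τ / ξ) + (s : ℂ) / (1 + g) + (τ / ξ + (s : ℂ) + 1) / (1 + ξ * g) ∧
    g' * g = (f' - 1 - (s : ℂ)) * (f' - 1 - (s : ℂ) + (k : ℂ)) /
      (ξ * f' * (f' + (k : ℂ) + τ / ξ)) ∧
    β' / β = -(ξ * g / g') *
      (((1 + g') * f' + ((k : ℂ) + τ / ξ) * g' - (s : ℂ) - 1) /
        ((1 + ξ * g) * f' + (k : ℂ) - (s : ℂ) - 1)) :=
  stmt17_general k s ξ τ b b' α α' β β' hξ hcomp f f' g g' hf hf' hg hg' hα hα' hβ hβ' hkb hbb' hα'1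
    hξα hf'0 hf'1 hf'2 hf'3
end
end

section
/- (Reduction to the difference Painlevé IV equation.) Let k ≥ 1 be an integer, s a nonnegative integer, and τ, b, b′, α, α′, β, β′ ∈ ℂ. Set Λ = diag(1, 0), A = (k+b)·[[−1, −αβ],[1/(αβ), 1]], C = [[b, bβ],[τ/β, τ]], A′ = (k+b′)·[[−1, −α′β′],[1/(α′β′), 1]], C′ = [[b′, b′β′],[τ/β′, τ]]. Assume that for every ζ ∈ ℂ with ζ ≠ s+1: (I + (ζ−(s+1))^{−1}A)·(Λζ + C) = (Λζ + C′)·(I + (ζ−(s+1))^{−1}A′). Define f = 1/α, f′ = 1/α′, g = τα + b + s + 1, g′ = τα′ + b′ + s + 2. Assume the genericity conditions: α, α′, β, β′ are nonzero; k+b ≠ 0 and k+b′ ≠ 0; b ≠ b′; α′ ≠ 1; g − s − 1 ≠ 0 and g + k − s − 1 ≠ 0. Then: (i) f·f′ = τ·g / ((g − s − 1)(g + k − s − 1)); (ii) g + g′ = τ/f′ − (s+1)/(1 − f′) − k + 2s + 3; (iii) β′/β = τ/(f·(g + k − s − 1)). -/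
/-!
Substituting `ζ = c + ε⁻¹` with `c = s + 1` turns the compatibility condition into an identity
that is affine in `ε`, so it splits into a constant part `C + AΛ = C' + ΛA'` and a residue part
`c AΛ + AC = c ΛA' + C'A'`; the values `ε = ±1` (i.e. `ζ = s + 2` and `ζ = s`) isolate them.
The `(1,0)` entry of the constant part expresses `β'` through `β`, which is (iii). Eliminating `β'`
between it and the `(1,0)`, `(1,1)` resp. `(0,1)`, `(1,1)` entries of the residue part gives two
polynomial relations between `α`, `α'`, `τ` and `b`, `b'`, which are (i) and (ii) after clearing
denominators.
-/

open Matrix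

noncomputable section

theorem coeff_eq_of_forall_ne {F M : Type*} [Field F] [NeZero (2 : F)] [Ring M] [Algebra F M]
    {c : F} {A A' Λ C C' : M}
    (h : ∀ ζ : F, ζ ≠ c →
      (1 + (ζ - c)⁻¹ • A) * (ζ • Λ + C) = (ζ • Λ + C') * (1 + (ζ - c)⁻¹ • A')) :
    C + A * Λ = C' + Λ * A' ∧ c • (A * Λ) + A * C = c • (Λ * A') + C' * A' := by
  have hp := h (c + 1) (by simp)
  have hm := h (c - 1) (by simp)
  simp only [add_sub_cancel_left, sub_sub_cancel_left, inv_one, one_smul, inv_neg, neg_smul]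
    at hp hm
  simp only [add_mul, mul_add, sub_mul, mul_sub, one_mul, mul_one, smul_mul_assoc, mul_smul_comm,
    neg_mul, mul_neg, smul_add, add_smul, sub_smul, one_smul] at hp hm
  constructor
  · apply smul_right_injective M (two_ne_zero : (2 : F) ≠ 0)
    linear_combination (norm := module) hp + hm
  · apply smul_right_injective M (two_ne_zero : (2 : F) ≠ 0)
    linear_combination (norm := module) hp - hm

section PainleveEntries

variable {F : Type*} [Field F]

-- With `κ = k + b`, these are the matrices `A` and `C` of the compatibility condition.
def laxA (κ α β : F) : Matrix (Fin 2) (Fin 2) F := κ • !![-1, -(α * β); (α * β)⁻¹, 1]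

def laxC (b τ β : F) : Matrix (Fin 2) (Fin 2) F := !![b, b * β; τ / β, τ]

variable {κ κ' b b' c τ α α' β β' k : F}

theorem lax_constant_entry (hα : α ≠ 0) (hβ : β ≠ 0) (hβ' : β' ≠ 0)
    (h : laxC b τ β + laxA κ α β * diagonal ![1, 0] =
      laxC b' τ β' + diagonal ![1, 0] * laxA κ' α' β') :
    β' * (τ * α + κ) = τ * α * β := by
  have h10 := congrFun₂ h 1 0
  simp [laxA, laxC, vecMul_diagonal, mul_apply, Fin.sum_univ_two] at h10
  field_simp at h10
  linear_combination h10

theorem lax_residue_entries (hα : α ≠ 0) (hα' : α' ≠ 0) (hβ : β ≠ 0) (hβ' : β' ≠ 0)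
    (h : c • (laxA κ α β * diagonal ![1, 0]) + laxA κ α β * laxC b τ β =
      c • (diagonal ![1, 0] * laxA κ' α' β') + laxC b' τ β' * laxA κ' α' β') :
    κ * (τ * α + b) = κ' * τ * (1 - α') * α ∧
    κ * (c + τ * α + b) * α' * β' = κ' * τ * (1 - α') * α * β ∧
    κ * (τ * α + b) * β + κ' * b' * β' = κ' * α' * β' * (c + b') := by
  have h11 := congrFun₂ h 1 1
  have h10 := congrFun₂ h 1 0
  have h01 := congrFun₂ h 0 1
  simp [laxA, laxC, vecMul_diagonal, mul_apply, Fin.sum_univ_two] at h11 h10 h01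
  field_simp at h11 h10 h01
  exact ⟨by linear_combination h11, by linear_combination h10, by linear_combination -h01⟩

theorem painleve_f_relation (hκ : k + b ≠ 0) (hβ : β ≠ 0)
    (hA : β' * (τ * α + (k + b)) = τ * α * β)
    (h11 : (k + b) * (τ * α + b) = κ' * τ * (1 - α') * α)
    (h10 : (k + b) * (c + τ * α + b) * α' * β' = κ' * τ * (1 - α') * α * β) :
    (τ * α + b) * (τ * α + b + k) = α * α' * τ * (c + τ * α + b) := by
  have hβ'β : (c + τ * α + b) * α' * β' = (τ * α + b) * β := by
    refine mul_left_cancel₀ hκ ?_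
    linear_combination h10 - β * h11
  refine mul_right_cancel₀ hβ ?_
  linear_combination (c + τ * α + b) * α' * hA - (τ * α + b + k) * hβ'β

theorem painleve_g_relation (hκ' : k + b' ≠ 0) (hτ : τ ≠ 0) (hα : α ≠ 0) (hβ : β ≠ 0)
    (hA : β' * (τ * α + (k + b)) = τ * α * β)
    (h11 : κ * (τ * α + b) = (k + b') * τ * (1 - α') * α)
    (h01 : κ * (τ * α + b) * β + (k + b') * b' * β' = (k + b') * α' * β' * (c + b')) :
    α' * (τ * α + b + k + b' + c) = τ * α + b + k + b' := by
  have hβ' : τ * (1 - α') * α * β + b' * β' = α' * β' * (c + b') := by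
    refine mul_left_cancel₀ hκ' ?_
    linear_combination h01 - β * h11
  refine mul_right_cancel₀ (mul_ne_zero (mul_ne_zero hτ hα) hβ) ?_
  linear_combination (b' - α' * (c + b')) * hA - (τ * α + b + k) * hβ'

end PainleveEntries

theorem stmt18_general (k : ℕ) (s : ℕ)
    (τ b b' α α' β β' : ℂ)
    (hcomp : ∀ ζ : ℂ, ζ ≠ (s : ℂ) + 1 →
      (1 + (ζ - ((s : ℂ) + 1))⁻¹ •
          (((k : ℂ) + b) • (!![-1, -(α * β); (α * β)⁻¹, 1] : Mat2))) *
        (ζ • (Matrix.diagonal ![1, 0] : Mat2) + !![b, b * β; τ / β, τ]) =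
      (ζ • (Matrix.diagonal ![1, 0] : Mat2) + !![b', b' * β'; τ / β', τ]) *
        (1 + (ζ - ((s : ℂ) + 1))⁻¹ •
          (((k : ℂ) + b') • (!![-1, -(α' * β'); (α' * β')⁻¹, 1] : Mat2))))
    (f f' g g' : ℂ)
    (hf : f = α⁻¹) (hf' : f' = α'⁻¹)
    (hg : g = τ * α + b + (s : ℂ) + 1)
    (hg' : g' = τ * α' + b' + (s : ℂ) + 2)
    (hα : α ≠ 0) (hα' : α' ≠ 0) (hβ : β ≠ 0) (hβ' : β' ≠ 0)
    (hkb : (k : ℂ) + b ≠ 0) (hkb' : (k : ℂ) + b' ≠ 0)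
    (hα'1 : α' ≠ 1)
    (hg1 : g - (s : ℂ) - 1 ≠ 0) (hg2 : g + (k : ℂ) - (s : ℂ) - 1 ≠ 0) :
    f * f' = τ * g / ((g - (s : ℂ) - 1) * (g + (k : ℂ) - (s : ℂ) - 1)) ∧
    g + g' = τ / f' - ((s : ℂ) + 1) / (1 - f') - (k : ℂ) + 2 * (s : ℂ) + 3 ∧
    β' / β = τ / (f * (g + (k : ℂ) - (s : ℂ) - 1)) := by
  obtain ⟨hconst, hres⟩ := coeff_eq_of_forall_ne hcomp
  have hA := lax_constant_entry hα hβ hβ' hconst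
  obtain ⟨h11, h10, h01⟩ := lax_residue_entries hα hα' hβ hβ' hres
  have hτ : τ ≠ 0 := by
    rintro rfl
    simp [hβ', hkb] at hA
  have hf_rel := painleve_f_relation hkb hβ hA h11 h10
  have hg_rel := painleve_g_relation hkb' hτ hα hβ hA h11 h01
  have hX : g - s - 1 = τ * α + b := by rw [hg]; ring
  have hXk : g + k - s - 1 = τ * α + b + k := by rw [hg]; ring
  rw [hX] at hg1 ⊢
  rw [hXk] at hg2 ⊢
  subst hf hf' hg hg'
  refine ⟨?_, ?_, ?_⟩
  · rw [eq_div_iff (mul_ne_zero hg1 hg2)]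
    field_simp
    linear_combination hf_rel
  · field_simp
    linear_combination hg_rel
  · field_simp
    linear_combination hA

/-- reduction of the compatibility condition to the difference Painlevé IV
equation (the case `ξ = 0`). -/
theorem stmt18 (k : ℕ) (hk : 1 ≤ k) (s : ℕ)
    (τ b b' α α' β β' : ℂ)
    (hcomp : ∀ ζ : ℂ, ζ ≠ (s : ℂ) + 1 →
      (1 + (ζ - ((s : ℂ) + 1))⁻¹ •
          (((k : ℂ) + b) • (!![-1, -(α * β); (α * β)⁻¹, 1] : Mat2))) *
        (ζ • (Matrix.diagonal ![1, 0] : Mat2) + !![b, b * β; τ / β, τ]) =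
      (ζ • (Matrix.diagonal ![1, 0] : Mat2) + !![b', b' * β'; τ / β', τ]) *
        (1 + (ζ - ((s : ℂ) + 1))⁻¹ •
          (((k : ℂ) + b') • (!![-1, -(α' * β'); (α' * β')⁻¹, 1] : Mat2))))
    (f f' g g' : ℂ)
    (hf : f = α⁻¹) (hf' : f' = α'⁻¹)
    (hg : g = τ * α + b + (s : ℂ) + 1)
    (hg' : g' = τ * α' + b' + (s : ℂ) + 2)
    (hα : α ≠ 0) (hα' : α' ≠ 0) (hβ : β ≠ 0) (hβ' : β' ≠ 0)
    (hkb : (k : ℂ) + b ≠ 0) (hkb' : (k : ℂ) + b' ≠ 0)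
    (hbb' : b ≠ b')
    (hα'1 : α' ≠ 1)
    (hg1 : g - (s : ℂ) - 1 ≠ 0) (hg2 : g + (k : ℂ) - (s : ℂ) - 1 ≠ 0) :
    f * f' = τ * g / ((g - (s : ℂ) - 1) * (g + (k : ℂ) - (s : ℂ) - 1)) ∧
    g + g' = τ / f' - ((s : ℂ) + 1) / (1 - f') - (k : ℂ) + 2 * (s : ℂ) + 3 ∧
    β' / β = τ / (f * (g + (k : ℂ) - (s : ℂ) - 1)) :=
  stmt18_general k s τ b b' α α' β β' hcomp f f' g g' hf hf' hg hg' hα hα' hβ hβ' hkb hkb' hα'1 hg1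
    hg2
end
end

section
/- Let q ∈ ℂ with q ≠ 0 and q ≠ 1, let t ∈ ℂ with t ≠ 0, let A₋, A ∈ Mat(2,ℂ) satisfy A₋² = 0 and A² = 0, and let M₋, M : ℂ → Mat(2,ℂ) be analytic on all of ℂ. Define matrix-valued functions: 𝔸₁(x) = M₋(x)·((x − qt)I + A₋), 𝔸₀(x) = M(x)·((x − t)I + A), and 𝔹(x) = x·(xI − qtI − A₋)/(x − qt)² for x ≠ qt. Then the following are equivalent: (1) for every x ∈ ℂ with x ≠ t and x ≠ qt, 𝔸₁(x)·𝔹(x) = 𝔹(qx)·𝔸₀(x); (2) for every ζ ∈ ℂ with ζ ≠ t, (I + q^{−1}(ζ − t)^{−1}A₋)·M₋(ζ) = M(ζ)·(I + (ζ − t)^{−1}A). -/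
open Matrix

noncomputable section

/-- `(c•1 + B)(c•1 - B) = c²•1` when `B² = 0`. -/
lemma mul_conj' (B : Mat2) (hB : B * B = 0) (c : ℂ) :
    (c • (1 : Mat2) + B) * (c • (1 : Mat2) - B) = (c ^ 2) • 1 := by
  simp only [add_mul, mul_sub, smul_mul_assoc, mul_smul_comm, one_mul, mul_one, hB,
    smul_add, smul_sub, smul_smul, smul_zero, ← sq]
  abel

/-- `(c•1 - B)(c•1 + B) = c²•1` when `B² = 0`. -/
lemma mul_conj (B : Mat2) (hB : B * B = 0) (c : ℂ) :
    (c • (1 : Mat2) - B) * (c • (1 : Mat2) + B) = (c ^ 2) • 1 := by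
  simp only [sub_mul, mul_add, smul_mul_assoc, mul_smul_comm, one_mul, mul_one, hB,
    smul_add, smul_sub, smul_smul, smul_zero, ← sq]
  abel

lemma scale_one_add (c : ℂ) (hc : c ≠ 0) (B : Mat2) :
    (1 : Mat2) + c⁻¹ • B = c⁻¹ • (c • 1 + B) := by
  rw [smul_add, smul_smul, inv_mul_cancel₀ hc, one_smul]

lemma smul_cancel {c : ℂ} (hc : c ≠ 0) {X Y : Mat2} (h : c • X = c • Y) : X = Y := by
  have := congrArg (fun Z => c⁻¹ • Z) h
  simpa [smul_smul, inv_mul_cancel₀ hc] using this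

/-- Pointwise equivalence: the compatibility equation at `ζ` is equivalent to the
polynomial form `q(ζ-t)² Mp = (q(ζ-t)•1 - A₋) M ((ζ-t)•1 + A)`. -/
lemma key_iff (q t : ℂ) (hq0 : q ≠ 0) (Aprev A : Mat2)
    (hAprev : Aprev * Aprev = 0) (Mp M : Mat2) (ζ : ℂ) (hζ : ζ ≠ t) :
    ((1 + (q⁻¹ * (ζ - t)⁻¹) • Aprev) * Mp = M * (1 + (ζ - t)⁻¹ • A)) ↔
    ((q * (ζ - t) ^ 2) • Mp =
      ((q * (ζ - t)) • (1 : Mat2) - Aprev) * M * ((ζ - t) • (1 : Mat2) + A)) := by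
  set u : ℂ := ζ - t with hu_def
  have hu : u ≠ 0 := sub_ne_zero.mpr hζ
  have hqu : q * u ≠ 0 := mul_ne_zero hq0 hu
  -- E = q • Rt formulation
  set E : Mat2 := ((q * u) • (1 : Mat2) + Aprev) * Mp with hE
  set Rt : Mat2 := M * (u • (1 : Mat2) + A) with hRt
  have step1 : ((1 + (q⁻¹ * (ζ - t)⁻¹) • Aprev) * Mp = M * (1 + (ζ - t)⁻¹ • A)) ↔
      E = q • Rt := by
    have hs : (q⁻¹ * (ζ - t)⁻¹ : ℂ) = (q * u)⁻¹ := by rw [mul_inv]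
    rw [hs, scale_one_add (q * u) hqu Aprev, scale_one_add u hu A,
      smul_mul_assoc, mul_smul_comm]
    constructor
    · intro h
      have h2 := congrArg (fun Z => (q * u) • Z) h
      simp only [smul_smul, mul_inv_cancel₀ hqu, one_smul] at h2
      rw [hE, hRt, h2]
      congr 1
      field_simp
    · intro h
      rw [hE, hRt] at h
      rw [h, smul_smul]
      congr 1
      field_simp
  have step2 : ((q * u ^ 2) • Mp =
      ((q * u) • (1 : Mat2) - Aprev) * M * (u • (1 : Mat2) + A)) ↔ E = q • Rt := by
    constructor
    · intro h
      rw [mul_assoc (((q * u) • (1 : Mat2) - Aprev)) M ((u • (1 : Mat2) + A))] at h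
      have h2 := congrArg (fun Z => (((q * u) • (1 : Mat2) + Aprev)) * Z) h
      simp only [mul_smul_comm] at h2
      rw [← mul_assoc, mul_conj' Aprev hAprev (q * u), smul_mul_assoc, one_mul] at h2
      -- h2 : (q*u^2) • (((q*u)•1+Aprev)*Mp) = (q*u)^2 • (M*(u•1+A))
      rw [hE, hRt]
      apply smul_cancel (mul_ne_zero hq0 (pow_ne_zero 2 hu))
      rw [h2, smul_smul]
      congr 1
      ring
    · intro h
      rw [hE, hRt] at h
      have h2 := congrArg (fun Z => (((q * u) • (1 : Mat2) - Aprev)) * Z) h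
      simp only [mul_smul_comm] at h2
      rw [← mul_assoc, mul_conj Aprev hAprev (q * u), smul_mul_assoc, one_mul] at h2
      -- h2 : (q*u)^2 • Mp = q • (((q*u)•1 - Aprev) * (M*(u•1+A)))
      apply smul_cancel hq0
      rw [smul_smul, show q * (q * u ^ 2) = (q * u) ^ 2 by ring, h2,
        mul_assoc (((q * u) • (1 : Mat2) - Aprev)) M ((u • (1 : Mat2) + A))]
  rw [step1, ← step2]

/-- with `𝔸₁(x) = M₋(x)((x−qt)I + A₋)`, `𝔸₀(x) = M(x)((x−t)I + A)` and
`𝔹(x) = x(xI − qtI − A₋)/(x−qt)²`, the identity `𝔸₁(x)𝔹(x) = 𝔹(qx)𝔸₀(x)` (for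
`x ≠ t, qt`) is equivalent to the compatibility condition of the `q`-Lax pair,
`(I + q⁻¹(ζ−t)⁻¹A₋) M₋(ζ) = M(ζ)(I + (ζ−t)⁻¹A)` for `ζ ≠ t`.
Here `A₋, M₋` are written `Aprev, Mprev`. -/
theorem stmt19 (q t : ℂ) (hq0 : q ≠ 0) (hq1 : q ≠ 1) (ht : t ≠ 0)
    (Aprev A : Mat2) (hAprev : Aprev * Aprev = 0) (hA : A * A = 0)
    (Mprev M : ℂ → Mat2)
    (hMprev : ∀ i j, Differentiable ℂ fun ζ => Mprev ζ i j)
    (hM : ∀ i j, Differentiable ℂ fun ζ => M ζ i j) :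
    (∀ x : ℂ, x ≠ t → x ≠ q * t →
      (Mprev x * ((x - q * t) • (1 : Mat2) + Aprev)) *
          ((x * ((x - q * t) ^ 2)⁻¹) • ((x - q * t) • (1 : Mat2) - Aprev)) =
        ((q * x * ((q * x - q * t) ^ 2)⁻¹) • ((q * x - q * t) • (1 : Mat2) - Aprev)) *
          (M x * ((x - t) • (1 : Mat2) + A))) ↔
    (∀ ζ : ℂ, ζ ≠ t →
      (1 + (q⁻¹ * (ζ - t)⁻¹) • Aprev) * Mprev ζ = M ζ * (1 + (ζ - t)⁻¹ • A)) := by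
  -- the polynomial functions
  set F : ℂ → Mat2 := fun ζ => (q * (ζ - t) ^ 2) • Mprev ζ with hF
  set G : ℂ → Mat2 := fun ζ =>
    ((q * (ζ - t)) • (1 : Mat2) - Aprev) * M ζ * ((ζ - t) • (1 : Mat2) + A) with hG
  -- Simplification of the left-hand side of (1)
  have hL : ∀ x : ℂ, x ≠ q * t →
      (Mprev x * ((x - q * t) • (1 : Mat2) + Aprev)) *
        ((x * ((x - q * t) ^ 2)⁻¹) • ((x - q * t) • (1 : Mat2) - Aprev)) = x • Mprev x := by
    intro x hxqt
    have hsub : x - q * t ≠ 0 := sub_ne_zero.mpr hxqt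
    rw [mul_smul_comm, mul_assoc, mul_conj' Aprev hAprev (x - q * t),
      mul_smul_comm, mul_one, smul_smul]
    congr 1
    field_simp
  -- Simplification of the right-hand side of (1)
  have hR : ∀ x : ℂ,
      ((q * x * ((q * x - q * t) ^ 2)⁻¹) • ((q * x - q * t) • (1 : Mat2) - Aprev)) *
        (M x * ((x - t) • (1 : Mat2) + A)) = (q * x * ((q * (x - t)) ^ 2)⁻¹) • G x := by
    intro x
    rw [hG]
    simp only [← mul_sub q x t]
    rw [smul_mul_assoc,
      mul_assoc (((q * (x - t)) • (1 : Mat2) - Aprev)) (M x) (((x - t) • (1 : Mat2) + A))]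
  constructor
  · intro H ζ hζ
    rw [key_iff q t hq0 Aprev A hAprev (Mprev ζ) (M ζ) ζ hζ]
    -- F = G away from {t, q*t, 0}
    have hFG : ∀ x : ℂ, x ≠ t → x ≠ q * t → x ≠ 0 → F x = G x := by
      intro x hxt hxqt hx0
      have h := H x hxt hxqt
      rw [hL x hxqt, hR x] at h
      have hxt' : x - t ≠ 0 := sub_ne_zero.mpr hxt
      have h2 := congrArg (fun Z => (q * (x - t) ^ 2 * x⁻¹) • Z) h
      simp only [smul_smul] at h2
      rw [show q * (x - t) ^ 2 * x⁻¹ * x = q * (x - t) ^ 2 by field_simp] at h2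
      rw [show q * (x - t) ^ 2 * x⁻¹ * (q * x * ((q * (x - t)) ^ 2)⁻¹) = 1 by
        field_simp] at h2
      rw [one_smul] at h2
      exact h2
    -- extend to all of ℂ by continuity
    have hFc : Continuous F := by
      apply continuous_matrix
      intro i j
      simp only [hF, Matrix.smul_apply, smul_eq_mul]
      exact (continuous_const.mul (((continuous_id.sub continuous_const).pow 2))).mul
        (hMprev i j).continuous
    have hMc : Continuous M := by
      apply continuous_matrix
      intro i j
      exact (hM i j).continuous
    have hGc : Continuous G := by
      apply Continuous.matrix_mul
      apply Continuous.matrix_mul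
      · apply continuous_matrix
        intro i j
        simp only [Matrix.sub_apply, Matrix.smul_apply, smul_eq_mul]
        exact ((continuous_const.mul (continuous_id.sub continuous_const)).mul
          continuous_const).sub continuous_const
      · exact hMc
      · apply continuous_matrix
        intro i j
        simp only [Matrix.add_apply, Matrix.smul_apply, smul_eq_mul]
        exact ((continuous_id.sub continuous_const).mul continuous_const).add
          continuous_const
    have hdense : Dense (({t}ᶜ ∩ ({q * t}ᶜ ∩ {(0 : ℂ)}ᶜ)) : Set ℂ) := by
      exact (dense_compl_singleton t).inter_of_isOpen_left
        ((dense_compl_singleton (q * t)).inter_of_isOpen_left (dense_compl_singleton 0)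
          isOpen_compl_singleton) isOpen_compl_singleton
    have hall : F = G := by
      apply Continuous.ext_on hdense hFc hGc
      rintro x ⟨hxt, hxqt, hx0⟩
      exact hFG x hxt hxqt hx0
    exact congrFun hall ζ
  · intro H x hxt hxqt
    have hFGx : F x = G x := by
      rw [hF, hG]
      exact (key_iff q t hq0 Aprev A hAprev (Mprev x) (M x) x hxt).mp (H x hxt)
    rw [hL x hxqt, hR x]
    have : G x = (q * (x - t) ^ 2) • Mprev x := hFGx.symm
    rw [this, smul_smul]
    congr 1
    have hxt' : x - t ≠ 0 := sub_ne_zero.mpr hxt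
    field_simp
end
end
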